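/- arXiv:2203.03294 — 6 statements merged into one kernel-verified Lean document; each statement's English description precedes it below -/
import Mathlib

section
/- Let Λ be a left noetherian ring and let 𝒳 be a contravariantly finite resolving subcategory of Λ-mod. If res.dim_𝒳 Λ-mod ≤ 2, then 𝒳 is closed under kernels of morphisms; that is, for every morphism h: X → X' with X, X' ∈ 𝒳, the kernel Ker h belongs to 𝒳. -/
open CategoryTheory Limits

universe u

namespace Paper

/-- `𝒳` is a full additive subcategory of `Λ`-mod, closed under direct summands and
isomorphisms and containing the zero module, encoded as a predicate on `ModuleCat Λ`. -/
structure IsSubcat (Λ : Type u) [Ring Λ] (P : ModuleCat.{u} Λ → Prop) : Prop where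
  fg : ∀ M, P M → Module.Finite Λ M
  zero_mem : P (ModuleCat.of Λ PUnit)
  iso_closed : ∀ {M N : ModuleCat.{u} Λ}, (M ≅ N) → P M → P N
  sum_closed : ∀ {M N : ModuleCat.{u} Λ}, P M → P N → P (ModuleCat.of Λ (M × N))
  summand_closed : ∀ {M N : ModuleCat.{u} Λ}, P N →
    (∃ (i : M ⟶ N) (p : N ⟶ M), i ≫ p = 𝟙 M) → P M

/-- `𝒳` is a contravariantly finite subcategory of `Λ`-mod: every finitely generated
module has a right `𝒳`-approximation. -/
def ContravariantlyFinite {Λ : Type u} [Ring Λ] (P : ModuleCat.{u} Λ → Prop) : Prop :=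
  ∀ M : ModuleCat.{u} Λ, Module.Finite Λ M →
    ∃ (X : ModuleCat.{u} Λ) (_ : P X) (θ : X ⟶ M),
      ∀ (Y : ModuleCat.{u} Λ), P Y → ∀ g : Y ⟶ M, ∃ h : Y ⟶ X, h ≫ θ = g

/-- `𝒳` is a resolving subcategory of `Λ`-mod: it contains `Λ` and is closed under
extensions and kernels of epimorphisms. -/
structure IsResolving {Λ : Type u} [Ring Λ] (P : ModuleCat.{u} Λ → Prop) : Prop where
  self_mem : P (ModuleCat.of Λ Λ)
  ext_closed : ∀ {A B C : ModuleCat.{u} Λ} (f : A ⟶ B) (g : B ⟶ C),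
    Function.Injective f → Function.Surjective g →
    (∀ b : B, g b = 0 ↔ ∃ a : A, f a = b) → P A → P C → P B
  ker_epi_closed : ∀ {B C : ModuleCat.{u} Λ} (g : B ⟶ C), Function.Surjective g →
    P B → P C → P (ModuleCat.of Λ (LinearMap.ker g.hom))

/-- `res.dim_𝒳 M ≤ 2` : there is an `𝒳`-resolution `0 → X₂ → X₁ → X₀ → M → 0`, i.e.
a complex with entries in `𝒳` which becomes exact under `Hom_Λ(Y, -)` for every `Y ∈ 𝒳`. -/
def ResDimLE2 {Λ : Type u} [Ring Λ] (P : ModuleCat.{u} Λ → Prop) (M : ModuleCat.{u} Λ) :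
    Prop :=
  ∃ (X₂ X₁ X₀ : ModuleCat.{u} Λ) (_ : P X₂) (_ : P X₁) (_ : P X₀)
    (d₂ : X₂ ⟶ X₁) (d₁ : X₁ ⟶ X₀) (d₀ : X₀ ⟶ M),
    d₂ ≫ d₁ = 0 ∧ d₁ ≫ d₀ = 0 ∧
    ∀ Y : ModuleCat.{u} Λ, P Y →
      (∀ g : Y ⟶ X₂, g ≫ d₂ = 0 → g = 0) ∧
      (∀ g : Y ⟶ X₁, g ≫ d₁ = 0 → ∃ h : Y ⟶ X₂, h ≫ d₂ = g) ∧
      (∀ g : Y ⟶ X₀, g ≫ d₀ = 0 → ∃ h : Y ⟶ X₁, h ≫ d₁ = g) ∧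
      (∀ g : Y ⟶ M, ∃ h : Y ⟶ X₀, h ≫ d₀ = g)

/-- `res.dim_𝒳 Λ-mod ≤ 2`. -/
def GlobalResDimLE2 {Λ : Type u} [Ring Λ] (P : ModuleCat.{u} Λ → Prop) : Prop :=
  ∀ M : ModuleCat.{u} Λ, Module.Finite Λ M → ResDimLE2 P M

private def spanHom {Λ : Type u} [Ring Λ] (M : ModuleCat.{u} Λ) (m : M) :
    ModuleCat.of Λ Λ ⟶ M :=
  ModuleCat.ofHom (LinearMap.toSpanSingleton Λ M m)

private lemma spanHom_apply {Λ : Type u} [Ring Λ] (M : ModuleCat.{u} Λ) (m : M) (r : Λ) :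
    spanHom M m r = r • m := rfl

set_option maxHeartbeats 1000000 in
/-- If `Λ` is left noetherian, `𝒳` is a contravariantly finite
resolving subcategory of `Λ`-mod and `res.dim_𝒳 Λ-mod ≤ 2`, then `𝒳` is closed under
kernels of morphisms. -/
theorem statement0 {Λ : Type u} [Ring Λ] [IsNoetherianRing Λ]
    (P : ModuleCat.{u} Λ → Prop) (hsub : IsSubcat Λ P)
    (hcf : ContravariantlyFinite P) (hres : IsResolving P)
    (hdim : GlobalResDimLE2 P) :
    ∀ (X X' : ModuleCat.{u} Λ), P X → P X' → ∀ h : X ⟶ X',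
      P (ModuleCat.of Λ (LinearMap.ker h.hom)) := by
  intro X X' hX hX' hm
  haveI : Module.Finite Λ X' := hsub.fg X' hX'
  set C : ModuleCat.{u} Λ := ModuleCat.of Λ (↑X' ⧸ LinearMap.range hm.hom) with hCdef
  have hCfin : Module.Finite Λ C :=
    inferInstanceAs (Module.Finite Λ (↑X' ⧸ LinearMap.range hm.hom))
  obtain ⟨X₂, X₁, X₀, hP2, hP1, hP0, d₂, d₁, d₀, hc21, hc10, hhom⟩ := hdim C hCfin
  obtain ⟨hΛ2, hΛ1, hΛ0, hΛs⟩ := hhom (ModuleCat.of Λ Λ) hres.self_mem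
  -- elementwise consequences of the complex conditions
  have hd21 : ∀ a : X₂, d₁ (d₂ a) = 0 := by
    intro a; have := ConcreteCategory.congr_hom hc21 a; simpa using this
  have hd10 : ∀ a : X₁, d₀ (d₁ a) = 0 := by
    intro a; have := ConcreteCategory.congr_hom hc10 a; simpa using this
  -- d₂ is injective
  have hd2inj : Function.Injective d₂ := by
    have key : ∀ a : X₂, d₂ a = 0 → a = 0 := by
      intro a ha
      have hg : spanHom X₂ a ≫ d₂ = 0 := by
        refine ModuleCat.hom_ext (LinearMap.ext fun x => ?_)
        show d₂ (spanHom X₂ a x) = 0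
        rw [spanHom_apply, map_smul, ha, smul_zero]
      have h0 := hΛ2 _ hg
      have := ConcreteCategory.congr_hom h0 (1 : Λ)
      rw [spanHom_apply, one_smul] at this
      simpa using this
    intro a b hab
    have := key (a - b) (by rw [map_sub, hab, sub_self])
    exact sub_eq_zero.mp this
  -- exactness at X₁
  have hexact1 : ∀ y : X₁, d₁ y = 0 → ∃ n : X₂, d₂ n = y := by
    intro y hy
    have hg : spanHom X₁ y ≫ d₁ = 0 := by
      refine ModuleCat.hom_ext (LinearMap.ext fun x => ?_)
      show d₁ (spanHom X₁ y x) = 0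
      rw [spanHom_apply, map_smul, hy, smul_zero]
    obtain ⟨g, hgeq⟩ := hΛ1 _ hg
    refine ⟨g (1 : Λ), ?_⟩
    have := ConcreteCategory.congr_hom hgeq (1 : Λ)
    rw [spanHom_apply, one_smul] at this
    simpa using this
  -- exactness at X₀
  have hexact0 : ∀ y : X₀, d₀ y = 0 → ∃ n : X₁, d₁ n = y := by
    intro y hy
    have hg : spanHom X₀ y ≫ d₀ = 0 := by
      refine ModuleCat.hom_ext (LinearMap.ext fun x => ?_)
      show d₀ (spanHom X₀ y x) = 0
      rw [spanHom_apply, map_smul, hy, smul_zero]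
    obtain ⟨g, hgeq⟩ := hΛ0 _ hg
    refine ⟨g (1 : Λ), ?_⟩
    have := ConcreteCategory.congr_hom hgeq (1 : Λ)
    rw [spanHom_apply, one_smul] at this
    simpa using this
  -- the projection π : X' → C
  set π : X' ⟶ C := ModuleCat.ofHom ((LinearMap.range hm.hom).mkQ : X' →ₗ[Λ] ↑X' ⧸ LinearMap.range hm.hom)
    with hπdef
  have hπzero : ∀ x' : X', π x' = 0 ↔ ∃ x : X, hm x = x' := by
    intro x'
    constructor
    · intro hx'
      have : x' ∈ LinearMap.range hm.hom := (Submodule.Quotient.mk_eq_zero _).mp hx'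
      exact this
    · rintro ⟨x, rfl⟩
      exact (Submodule.Quotient.mk_eq_zero _).mpr ⟨x, rfl⟩
  -- lift π through d₀
  obtain ⟨f, hf⟩ := (hhom X' hX').2.2.2 π
  have hfel : ∀ x' : X', d₀ (f x') = π x' := by
    intro x'; have := ConcreteCategory.congr_hom hf x'; simpa using this
  -- the module Z = X₁ ⊕ X' and the epimorphism φ : Z → X₀
  set Z : ModuleCat.{u} Λ := ModuleCat.of Λ (↑X₁ × ↑X') with hZdef
  have hPZ : P Z := hsub.sum_closed hP1 hX'
  set φ : Z ⟶ X₀ :=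
    ModuleCat.ofHom (LinearMap.coprod d₁.hom f.hom : ↑X₁ × ↑X' →ₗ[Λ] ↑X₀)
    with hφdef
  have hφel : ∀ v : ↑X₁ × ↑X', φ v = d₁ v.1 + f v.2 := fun v => rfl
  have hφsurj : Function.Surjective φ := by
    intro y₀
    obtain ⟨x', hx'⟩ : ∃ x' : X', π x' = d₀ y₀ :=
      Submodule.Quotient.mk_surjective _ (d₀ y₀)
    have hdz : d₀ (y₀ - f x') = 0 := by
      rw [map_sub, hfel, hx', sub_self]
    obtain ⟨y, hy⟩ := hexact0 _ hdz
    exact ⟨(y, x'), by rw [hφel]; rw [hy]; abel⟩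
  have hPB : P (ModuleCat.of Λ (LinearMap.ker φ.hom)) :=
    hres.ker_epi_closed φ hφsurj hPZ hP0
  -- the module G
  set ψ : ↑X × (↑X₁ × ↑X') →ₗ[Λ] ↑X' × ↑X₀ :=
    LinearMap.prod
      ((hm.hom.comp (LinearMap.fst Λ ↑X (↑X₁ × ↑X'))) -
        ((LinearMap.snd Λ ↑X₁ ↑X').comp (LinearMap.snd Λ ↑X (↑X₁ × ↑X'))))
      (φ.hom.comp (LinearMap.snd Λ ↑X (↑X₁ × ↑X')))
    with hψdef
  have hψmem : ∀ v : ↑X × (↑X₁ × ↑X'),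
      v ∈ LinearMap.ker ψ ↔ hm v.1 = v.2.2 ∧ d₁ v.2.1 + f v.2.2 = 0 := by
    intro v
    rw [LinearMap.mem_ker, hψdef]
    constructor
    · intro hv
      have h1 : hm v.1 - v.2.2 = 0 := congrArg Prod.fst hv
      have h2 : φ v.2 = 0 := congrArg Prod.snd hv
      exact ⟨sub_eq_zero.mp h1, by rw [← hφel]; exact h2⟩
    · rintro ⟨h1, h2⟩
      refine Prod.ext ?_ ?_
      · show hm v.1 - v.2.2 = 0
        rw [h1, sub_self]
      · show φ v.2 = 0
        rw [hφel]; exact h2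
  set G : ModuleCat.{u} Λ := ModuleCat.of Λ (LinearMap.ker ψ) with hGdef
  -- the inclusion ι : X₂ → G
  set ι : X₂ ⟶ G :=
    ModuleCat.ofHom (LinearMap.codRestrict (LinearMap.ker ψ)
      (LinearMap.prod 0 (LinearMap.prod d₂.hom 0))
      (fun n => by
        rw [hψmem]
        constructor
        · show hm 0 = 0; exact map_zero _
        · show d₁ (d₂ n) + f 0 = 0
          rw [hd21, map_zero, add_zero]) : ↑X₂ →ₗ[Λ] LinearMap.ker ψ)
    with hιdef
  have hιel : ∀ n : X₂, (ι n).1 = ((0, d₂ n, 0) : ↑X × ↑X₁ × ↑X') := fun n => rfl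
  -- the projection pG : G → X
  set pG : G ⟶ X :=
    ModuleCat.ofHom ((LinearMap.fst Λ ↑X (↑X₁ × ↑X')).comp (LinearMap.ker ψ).subtype :
      LinearMap.ker ψ →ₗ[Λ] ↑X)
    with hpGdef
  have hpGel : ∀ v : G, pG v = v.1.1 := fun v => rfl
  -- ι injective
  have hιinj : Function.Injective ι := by
    intro a b hab
    apply hd2inj
    have := congrArg (fun v : G => v.1.2.1) hab
    simpa [hιel] using this
  -- pG surjective
  have hpGsurj : Function.Surjective pG := by
    intro x
    have hz : π (hm x) = 0 := (hπzero _).mpr ⟨x, rfl⟩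
    have hd : d₀ (-(f (hm x))) = 0 := by
      rw [map_neg, hfel, hz, neg_zero]
    obtain ⟨y, hy⟩ := hexact0 _ hd
    refine ⟨⟨(x, y, hm x), ?_⟩, rfl⟩
    rw [hψmem]
    exact ⟨rfl, by rw [hy]; abel⟩
  -- exactness of (ι, pG)
  have hexG : ∀ b : G, pG b = 0 ↔ ∃ a : X₂, ι a = b := by
    intro b
    constructor
    · intro hb
      have hbmem := (hψmem _).mp b.2
      have hb1 : b.1.1 = 0 := hb
      have hb2 : b.1.2.2 = 0 := by
        rw [← hbmem.1, hb1, map_zero]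
      have hb3 : d₁ b.1.2.1 = 0 := by
        have h2 := hbmem.2
        rwa [hb2, map_zero, add_zero] at h2
      obtain ⟨n, hn⟩ := hexact1 _ hb3
      refine ⟨n, ?_⟩
      apply Subtype.ext
      rw [hιel]
      refine Prod.ext (by rw [hb1]) (Prod.ext (by simpa using hn) (by rw [hb2]))
    · rintro ⟨a, rfl⟩
      show (ι a).1.1 = 0
      rw [hιel]
  have hPG : P G := hres.ext_closed ι pG hιinj hpGsurj hexG hP2 hX
  -- the projection q : G → B
  set q : G ⟶ ModuleCat.of Λ (LinearMap.ker φ.hom) :=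
    ModuleCat.ofHom (LinearMap.codRestrict (LinearMap.ker φ.hom)
      ((LinearMap.snd Λ ↑X (↑X₁ × ↑X')).comp (LinearMap.ker ψ).subtype)
      (fun v => by
        have hv := (hψmem _).mp v.2
        rw [LinearMap.mem_ker, hφel]
        exact hv.2) : LinearMap.ker ψ →ₗ[Λ] LinearMap.ker φ.hom)
    with hqdef
  have hqel : ∀ v : G, (q v).1 = v.1.2 := fun v => rfl
  have hqsurj : Function.Surjective q := by
    rintro ⟨⟨y, x'⟩, hb⟩
    have hb0 : φ (y, x') = 0 := LinearMap.mem_ker.mp hb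
    have hb' : d₁ y + f x' = 0 := by rw [hφel] at hb0; exact hb0
    have hπx' : π x' = 0 := by
      have hfx : f x' = -(d₁ y) := by linear_combination (norm := abel) hb'
      rw [← hfel, hfx, map_neg, hd10, neg_zero]
    obtain ⟨x, hx⟩ := (hπzero _).mp hπx'
    refine ⟨⟨(x, y, x'), ?_⟩, ?_⟩
    · rw [hψmem]; exact ⟨hx, hb'⟩
    · apply Subtype.ext
      rw [hqel]
  have hPker : P (ModuleCat.of Λ (LinearMap.ker q.hom)) :=
    hres.ker_epi_closed q hqsurj hPG hPB
  -- finally, ker q ≅ ker hm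
  refine hsub.iso_closed (LinearEquiv.toModuleIso ?_) hPker
  refine LinearEquiv.ofLinear
    (LinearMap.codRestrict (LinearMap.ker hm.hom)
      ((LinearMap.fst Λ ↑X (↑X₁ × ↑X')).comp
        ((LinearMap.ker ψ).subtype.comp (LinearMap.ker q.hom).subtype))
      ?_)
    (LinearMap.codRestrict (LinearMap.ker q.hom)
      (LinearMap.codRestrict (LinearMap.ker ψ)
        (LinearMap.prod (LinearMap.ker hm.hom).subtype 0)
        ?_)
      ?_)
    ?_ ?_
  · -- values land in ker hm
    intro v
    have hmemψ := (hψmem _).mp v.1.2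
    have hq0 : q v.1 = 0 := LinearMap.mem_ker.mp v.2
    have hsnd : v.1.1.2 = (0 : ↑X₁ × ↑X') := by
      have h1 : (q v.1).1 = v.1.1.2 := hqel v.1
      rw [hq0] at h1
      simpa using h1.symm
    have h22 : v.1.1.2.2 = 0 := by rw [hsnd]; rfl
    rw [LinearMap.mem_ker]
    show hm v.1.1.1 = 0
    rw [hmemψ.1]
    exact h22
  · -- (x, 0, 0) ∈ ker ψ
    intro v
    rw [hψmem]
    constructor
    · show hm (v : X) = 0
      exact LinearMap.mem_ker.mp v.2
    · show d₁ 0 + f 0 = 0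
      rw [map_zero, map_zero, add_zero]
  · -- (x, 0, 0) ∈ ker q
    intro v
    rw [LinearMap.mem_ker]
    apply Subtype.ext
    rw [hqel]
    rfl
  · -- t ∘ j = id
    apply LinearMap.ext
    intro v
    apply Subtype.ext
    rfl
  · -- j ∘ t = id
    apply LinearMap.ext
    intro v
    apply Subtype.ext
    apply Subtype.ext
    have hq0 : q v.1 = 0 := LinearMap.mem_ker.mp v.2
    have hsnd : v.1.1.2 = (0 : ↑X₁ × ↑X') := by
      have h1 : (q v.1).1 = v.1.1.2 := hqel v.1
      rw [hq0] at h1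
      simpa using h1.symm
    refine Prod.ext rfl ?_
    exact hsnd.symm

end Paper
end

section
/- Let F be an 𝒳^op-module and X ∈ 𝒳. If F(X) has a minimal element, then X is an indecomposable left Λ-module. -/
open CategoryTheory Limits

universe u

namespace Paper

/-- A subfunctor of an `Ab`-valued functor `F`. -/
structure Subfunctor {D : Type*} [Category D] (F : D ⥤ AddCommGrpCat.{u}) where
  pt : ∀ X : D, AddSubgroup (F.obj X)
  map_mem : ∀ {X Y : D} (f : X ⟶ Y) (x : F.obj X), x ∈ pt X → F.map f x ∈ pt Y

namespace Subfunctor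

variable {D : Type*} [Category D] {F : D ⥤ AddCommGrpCat.{u}}

/-- Containment of subfunctors. -/
def le (S T : Subfunctor F) : Prop := ∀ X, S.pt X ≤ T.pt X

/-- A subfunctor of `F` is finitely generated if it is generated by finitely
many elements. -/
def FG (S : Subfunctor F) : Prop :=
  ∃ (n : ℕ) (X : Fin n → D) (x : ∀ i, F.obj (X i)),
    (∀ i, x i ∈ S.pt (X i)) ∧ ∀ T : Subfunctor F, (∀ i, x i ∈ T.pt (X i)) → S.le T

/-- A subfunctor is noetherian if ascending chains of subfunctors below it stabilize. -/
def Noetherian (S : Subfunctor F) : Prop :=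
  ∀ c : ℕ → Subfunctor F, (∀ n, (c n).le S) → (∀ n, (c n).le (c (n + 1))) →
    ∃ n, ∀ k, n ≤ k → (c k).le (c n)

/-- A subfunctor is artinian if descending chains of subfunctors below it stabilize. -/
def Artinian (S : Subfunctor F) : Prop :=
  ∀ c : ℕ → Subfunctor F, (∀ n, (c n).le S) → (∀ n, (c (n + 1)).le (c n)) →
    ∃ n, ∀ k, n ≤ k → (c n).le (c k)

/-- A subfunctor is finite if it is both noetherian and artinian. -/
def Finite (S : Subfunctor F) : Prop := S.Noetherian ∧ S.Artinian

end Subfunctor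

/-- A functor is noetherian if its ascending chains of subfunctors stabilize. -/
def NoetherianFunctor {D : Type*} [Category D] (F : D ⥤ AddCommGrpCat.{u}) : Prop :=
  ∀ c : ℕ → Subfunctor F, (∀ n, (c n).le (c (n + 1))) → ∃ n, ∀ k, n ≤ k → (c k).le (c n)

/-- A functor is artinian if its descending chains of subfunctors stabilize. -/
def ArtinianFunctor {D : Type*} [Category D] (F : D ⥤ AddCommGrpCat.{u}) : Prop :=
  ∀ c : ℕ → Subfunctor F, (∀ n, (c (n + 1)).le (c n)) → ∃ n, ∀ k, n ≤ k → (c n).le (c k)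

/-- A functor is finite if it is both noetherian and artinian. -/
def FiniteFunctor {D : Type*} [Category D] (F : D ⥤ AddCommGrpCat.{u}) : Prop :=
  NoetherianFunctor F ∧ ArtinianFunctor F

/-- A functor is locally finite if every finitely generated subfunctor is finite. -/
def LocallyFiniteFunctor {D : Type*} [Category D] (F : D ⥤ AddCommGrpCat.{u}) : Prop :=
  ∀ S : Subfunctor F, S.FG → S.Finite

/-- The category of additive functors `D ⥤ Ab` is locally finite. -/
def ModLocallyFinite (D : Type*) [Category D] [Preadditive D] : Prop :=
  ∀ F : D ⥤ AddCommGrpCat.{u}, F.Additive → LocallyFiniteFunctor F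

/-- `x ∈ F(X)` is a minimal element of the `𝒳ᵒᵖ`-module `F` : `x ≠ 0` and `F(f)(x) = 0`
for every proper epimorphism `f : X → X'` in `𝒳`. -/
def IsMinimalElement {Λ : Type u} [Ring Λ] {P : ModuleCat.{u} Λ → Prop}
    (F : ObjectProperty.FullSubcategory P ⥤ AddCommGrpCat.{u}) (X : ObjectProperty.FullSubcategory P) (x : F.obj X) : Prop :=
  x ≠ 0 ∧ ∀ (X' : ObjectProperty.FullSubcategory P) (f : X ⟶ X'),
    Function.Surjective (show X.obj ⟶ X'.obj from f.hom) →
      ¬Function.Bijective (show X.obj ⟶ X'.obj from f.hom) → F.map f x = 0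

/-! If `X ≅ Y ⊞ Z` with `Y, Z ≠ 0`, both projections are proper epimorphisms onto objects of
`𝒳` (which is closed under summands), so a minimal `x` is killed by both of them; since
`𝟙 X = p_Y ≫ i_Y + p_Z ≫ i_Z` and `F` is additive, `x = 0`. Likewise `X ≠ 0`, as otherwise
`𝟙 X = 0`. -/

section

variable {C : Type*} [Category C] (F : C ⥤ AddCommGrpCat.{u})

lemma eq_zero_of_id_eq_zero [HasZeroMorphisms C] [F.PreservesZeroMorphisms] {X : C}
    (h : 𝟙 X = 0) (x : F.obj X) : x = 0 := by
  simpa using congr(F.map $h x)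

lemma eq_zero_of_map_eq_zero_of_id_eq_add [Preadditive C] [F.Additive] {X Y Z : C}
    {p₁ : X ⟶ Y} {i₁ : Y ⟶ X} {p₂ : X ⟶ Z} {i₂ : Z ⟶ X} (h : p₁ ≫ i₁ + p₂ ≫ i₂ = 𝟙 X)
    {x : F.obj X} (h₁ : F.map p₁ x = 0) (h₂ : F.map p₂ x = 0) : x = 0 := by
  simpa [h₁, h₂] using congr(F.map $h x).symm

end

lemma Iso.id_eq_add_of_biprod {C : Type*} [Category C] [Preadditive C] {X Y Z : C}
    [HasBinaryBiproduct Y Z] (e : X ≅ Y ⊞ Z) :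
    (e.hom ≫ biprod.fst) ≫ biprod.inl ≫ e.inv + (e.hom ≫ biprod.snd) ≫ biprod.inr ≫ e.inv =
      𝟙 X := by
  rw [Category.assoc, Category.assoc, ← Preadditive.comp_add, ← Category.assoc biprod.fst,
    ← Category.assoc biprod.snd, ← Preadditive.add_comp, biprod.total, Category.id_comp,
    e.hom_inv_id]

lemma ModuleCat.not_injective_of_comp_eq_zero {Λ : Type u} [Ring Λ] {K M N : ModuleCat.{u} Λ}
    {j : K ⟶ M} [Mono j] {p : M ⟶ N} (h : j ≫ p = 0) (hK : ¬IsZero K) :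
    ¬Function.Injective p := fun hp ↦ by
  have : Mono p := (ModuleCat.mono_iff_injective p).2 hp
  exact hK (IsZero.of_mono_eq_zero j (by simpa using (cancel_mono p).1 (h.trans zero_comp.symm)))

open ObjectProperty

variable {Λ : Type u} [Ring Λ] {P : ModuleCat.{u} Λ → Prop}
  {F : FullSubcategory P ⥤ AddCommGrpCat.{u}}

lemma IsMinimalElement.map_homMk_eq_zero {X Y : FullSubcategory P} {x : F.obj X}
    (hx : IsMinimalElement F X x) (p : X.obj ⟶ Y.obj) [Epi p] {K : ModuleCat.{u} Λ}
    (j : K ⟶ X.obj) [Mono j] (hj : j ≫ p = 0) (hK : ¬IsZero K) :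
    F.map (homMk p) x = 0 :=
  hx.2 Y _ ((ModuleCat.epi_iff_surjective p).1 inferInstance)
    fun hp ↦ ModuleCat.not_injective_of_comp_eq_zero hj hK hp.1

/-- If `F` is an `𝒳ᵒᵖ`-module and `F(X)` has a minimal element,
then `X` is an indecomposable `Λ`-module. -/
theorem statement1 {Λ : Type u} [Ring Λ] (P : ModuleCat.{u} Λ → Prop)
    (hsub : IsSubcat Λ P) (F : ObjectProperty.FullSubcategory P ⥤ AddCommGrpCat.{u}) (hF : F.Additive)
    (X : ObjectProperty.FullSubcategory P) (x : F.obj X) (hx : IsMinimalElement F X x) :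
    Indecomposable X.obj := by
  refine ⟨fun hX ↦ hx.1 (eq_zero_of_id_eq_zero F (hom_ext (h := hX.eq_of_src _ _)) x),
    fun Y Z e ↦ ?_⟩
  by_contra! hYZ
  let Y' : FullSubcategory P :=
    ⟨Y, hsub.summand_closed X.2 ⟨biprod.inl ≫ e.inv, e.hom ≫ biprod.fst, by simp⟩⟩
  let Z' : FullSubcategory P :=
    ⟨Z, hsub.summand_closed X.2 ⟨biprod.inr ≫ e.inv, e.hom ≫ biprod.snd, by simp⟩⟩
  have h₁ := hx.map_homMk_eq_zero (Y := Y') (e.hom ≫ biprod.fst) (biprod.inr ≫ e.inv)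
    (by simp) hYZ.2
  have h₂ := hx.map_homMk_eq_zero (Y := Z') (e.hom ≫ biprod.snd) (biprod.inl ≫ e.inv)
    (by simp) hYZ.1
  exact hx.1 (eq_zero_of_map_eq_zero_of_id_eq_add F
    (i₁ := homMk (biprod.inl ≫ e.inv)) (i₂ := homMk (biprod.inr ≫ e.inv))
    (hom_ext (h := Iso.id_eq_add_of_biprod e)) h₁ h₂)

end Paper
end

section
/- Let F be an 𝒳^op-module and X ∈ 𝒳. If X is a noetherian left Λ-module, then for each nonzero element x ∈ F(X) there is an epimorphism f: X → X' with X' ∈ 𝒳 such that F(f)(x) is a minimal element in F(X'). -/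
open CategoryTheory Limits

universe u

namespace Paper

/-- Auxiliary: a morphism in the full subcategory, viewed as a linear map. -/
def toLin {Λ : Type u} [Ring Λ] {P : ModuleCat.{u} Λ → Prop} {X X' : ObjectProperty.FullSubcategory P}
    (f : X ⟶ X') : X.obj →ₗ[Λ] X'.obj := f.hom.hom

/-- If `F` is an `𝒳ᵒᵖ`-module, `X ∈ 𝒳` is a noetherian module and
`x ∈ F(X)` is non-zero, then there is an epimorphism `f : X → X'` in `𝒳` such that
`F(f)(x)` is a minimal element of `F(X')`. -/
theorem statement2 {Λ : Type u} [Ring Λ] (P : ModuleCat.{u} Λ → Prop)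
    (hsub : IsSubcat Λ P) (F : ObjectProperty.FullSubcategory P ⥤ AddCommGrpCat.{u}) (hF : F.Additive)
    (X : ObjectProperty.FullSubcategory P) (hnoeth : IsNoetherian Λ X.obj)
    (x : F.obj X) (hx : x ≠ 0) :
    ∃ (X' : ObjectProperty.FullSubcategory P) (f : X ⟶ X'),
      Function.Surjective (show X.obj ⟶ X'.obj from f.hom) ∧
      IsMinimalElement F X' (F.map f x) := by
  classical
  let S : Set (Submodule Λ X.obj) :=
    {K | ∃ (X' : ObjectProperty.FullSubcategory P) (f : X ⟶ X'),
      Function.Surjective (toLin f) ∧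
      LinearMap.ker (toLin f) = K ∧ F.map f x ≠ 0}
  have hne : S.Nonempty :=
    ⟨⊥, X, 𝟙 X, Function.surjective_id, LinearMap.ker_id, by rw [F.map_id]; exact hx⟩
  obtain ⟨K, hKS, hKmax⟩ := set_has_maximal_iff_noetherian.mpr hnoeth S hne
  obtain ⟨X', f, hsurj, hker, hne0⟩ := hKS
  refine ⟨X', f, hsurj, hne0, ?_⟩
  intro X'' g hgs' hgnb'
  have hgs : Function.Surjective (toLin g) := hgs'
  have hgnb : ¬ Function.Bijective (toLin g) := hgnb'
  by_contra h0
  have hcomp : (toLin (f ≫ g))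
      = (toLin g).comp (toLin f) := rfl
  have hmem : LinearMap.ker (toLin (f ≫ g)) ∈ S := by
    refine ⟨X'', f ≫ g, ?_, rfl, ?_⟩
    · rw [hcomp, LinearMap.coe_comp]; exact hgs.comp hsurj
    · rw [F.map_comp]; exact h0
  have hle : K ≤ LinearMap.ker (toLin (f ≫ g)) := by
    rw [← hker, hcomp, LinearMap.ker_comp]
    exact Submodule.comap_mono bot_le
  have hgninj : ¬ Function.Injective (toLin g) :=
    fun hinj => hgnb ⟨hinj, hgs⟩
  have hkg : LinearMap.ker (toLin g) ≠ ⊥ :=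
    fun hb => hgninj (LinearMap.ker_eq_bot.mp hb)
  obtain ⟨y, hymem, hyne⟩ := (Submodule.ne_bot_iff _).mp hkg
  obtain ⟨z, hz⟩ := hsurj y
  refine hKmax _ hmem (lt_of_le_of_ne hle fun heq => hyne ?_)
  have hzmem : z ∈ LinearMap.ker (toLin (f ≫ g)) := by
    rw [hcomp, LinearMap.mem_ker, LinearMap.comp_apply, hz]
    exact hymem
  rw [← heq, ← hker, LinearMap.mem_ker] at hzmem
  rw [← hz, hzmem]

end Paper
end

section
/- Let Λ be a left noetherian ring and let F be a non-zero 𝒳^op-module. If every family of morphisms between indecomposable modules in 𝒳 is noetherian, then there exists X ∈ 𝒳 such that F(X) has a universally minimal element. -/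
open CategoryTheory Limits

universe u

namespace Paper

/-- The composite `fᵢ₋₁ ∘ ⋯ ∘ f₀ : X 0 ⟶ X i` of a chain of morphisms. -/
def chainComp {C : Type*} [Category C] {X : ℕ → C} (f : ∀ i, X i ⟶ X (i + 1)) :
    ∀ i, X 0 ⟶ X i
  | 0 => 𝟙 _
  | (i + 1) => chainComp f i ≫ f i

/-- The composite `g₀ ∘ ⋯ ∘ gᵢ₋₁ : X i ⟶ X 0` of a downward chain of morphisms. -/
def chainCompDown {C : Type*} [Category C] {X : ℕ → C} (g : ∀ i, X (i + 1) ⟶ X i) :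
    ∀ i, X i ⟶ X 0
  | 0 => 𝟙 _
  | (i + 1) => g i ≫ chainCompDown g i

/-- Any family of homomorphisms between indecomposable modules in `𝒳` is noetherian. -/
def HomChainsNoetherian {Λ : Type u} [Ring Λ] (P : ModuleCat.{u} Λ → Prop) : Prop :=
  ∀ X : ℕ → ObjectProperty.FullSubcategory P, (∀ i, Indecomposable (X i).obj) →
    ∀ f : ∀ i, X i ⟶ X (i + 1), (∀ i, chainComp f i ≠ 0) →
      ∃ n, ∀ k, n ≤ k → IsIso (f k)

/-- Any family of homomorphisms between indecomposable modules in `𝒳` is artinian. -/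
def HomChainsArtinian {Λ : Type u} [Ring Λ] (P : ModuleCat.{u} Λ → Prop) : Prop :=
  ∀ X : ℕ → ObjectProperty.FullSubcategory P, (∀ i, Indecomposable (X i).obj) →
    ∀ g : ∀ i, X (i + 1) ⟶ X i, (∀ i, chainCompDown g i ≠ 0) →
      ∃ n, ∀ k, n ≤ k → IsIso (g k)

/-- `x ∈ F(X)` is a universally minimal element of the `𝒳ᵒᵖ`-module `F` : `x ≠ 0` and
`F(f)(x) = 0` for every morphism `f : X → X'` in `𝒳` which is not a split monomorphism. -/
def IsUniversallyMinimal {Λ : Type u} [Ring Λ] {P : ModuleCat.{u} Λ → Prop}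
    (F : ObjectProperty.FullSubcategory P ⥤ AddCommGrpCat.{u}) (X : ObjectProperty.FullSubcategory P) (x : F.obj X) : Prop :=
  x ≠ 0 ∧ ∀ (X' : ObjectProperty.FullSubcategory P) (f : X ⟶ X'),
    (¬∃ r : X' ⟶ X, f ≫ r = 𝟙 X) → F.map f x = 0

/-! If no universally minimal element existed, every nonzero `y ∈ F(Y)` with `Y`
indecomposable would survive some non-split-mono `Y ⟶ X'`, and then its projection to a
suitable indecomposable summand of `X'`; this is a non-isomorphism between indecomposables.
Iterating gives a chain of non-isomorphisms whose composites carry a nonzero element, hence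
are nonzero, contradicting `HomChainsNoetherian`. The summand exists because modules in `𝒳`
are noetherian: among epimorphisms `X ⟶ Y` in `𝒳` not killing `x`, one of maximal kernel has
indecomposable target, since splitting off a nonzero summand of `Y` enlarges the kernel. -/

section Chains

variable {D : Type*} [Category D] (F : D ⥤ AddCommGrpCat.{u}) {X : ℕ → D}
  (f : ∀ i, X i ⟶ X (i + 1)) {x : ∀ i, F.obj (X i)}

theorem map_chainComp_apply (hx : ∀ i, F.map (f i) (x i) = x (i + 1)) (n : ℕ) :
    F.map (chainComp f n) (x 0) = x n := by
  induction n with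
  | zero => simp [chainComp]
  | succ n ih => simp [chainComp, ih, hx]

theorem chainComp_ne_zero [HasZeroMorphisms D] [F.PreservesZeroMorphisms]
    (hx : ∀ i, F.map (f i) (x i) = x (i + 1)) (hx₀ : ∀ i, x i ≠ 0) (n : ℕ) :
    chainComp f n ≠ 0 := by
  intro h
  apply hx₀ n
  rw [← map_chainComp_apply F f hx n, h, F.map_zero]
  rfl

end Chains

theorem eq_zero_of_map_eq_zero_of_add_eq_id {D : Type*} [Category D] [Preadditive D]
    (F : D ⥤ AddCommGrpCat.{u}) [F.Additive] {Y A B : D} {p₁ : Y ⟶ A} {i₁ : A ⟶ Y}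
    {p₂ : Y ⟶ B} {i₂ : B ⟶ Y} (h : p₁ ≫ i₁ + p₂ ≫ i₂ = 𝟙 Y) {y : F.obj Y}
    (h₁ : F.map p₁ y = 0) (h₂ : F.map p₂ y = 0) : y = 0 := by
  simpa [h₁, h₂] using congr(F.map $h y).symm

theorem not_mono_of_comp_eq_zero {C : Type*} [Category C] [HasZeroMorphisms C] {B Y A : C}
    {j : B ⟶ Y} {r : Y ⟶ B} {p : Y ⟶ A} (hjr : j ≫ r = 𝟙 B) (hjp : j ≫ p = 0)
    (hB : ¬IsZero B) : ¬Mono p := by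
  intro _
  apply hB
  have hj : j = 0 := by rw [← cancel_mono p, hjp, zero_comp]
  rw [IsZero.iff_id_eq_zero, ← hjr, hj, zero_comp]

theorem ker_lt_ker_comp_of_not_mono {R : Type*} [Ring R] {M N A : ModuleCat.{u} R} (q : M ⟶ N)
    [Epi q] (p : N ⟶ A) (hp : ¬Mono p) :
    LinearMap.ker q.hom < LinearMap.ker (q ≫ p).hom := by
  rw [ModuleCat.mono_iff_ker_eq_bot] at hp
  have hq := (ModuleCat.epi_iff_surjective q).mp inferInstance
  rw [ModuleCat.hom_comp, LinearMap.ker_comp, ← Submodule.comap_bot]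
  exact Submodule.comap_strictMono_of_surjective hq (bot_lt_iff_ne_bot.mpr hp)

theorem comp_biprod_inl_add_comp_biprod_inr {C : Type*} [Category C] [Preadditive C]
    {Y A B : C} [HasBinaryBiproduct A B] (e : Y ≅ A ⊞ B) :
    (e.hom ≫ biprod.fst) ≫ biprod.inl ≫ e.inv + (e.hom ≫ biprod.snd) ≫ biprod.inr ≫ e.inv =
      𝟙 Y := by
  rw [Category.assoc, Category.assoc, ← Preadditive.comp_add, ← Category.assoc biprod.fst,
    ← Category.assoc biprod.snd, ← Preadditive.add_comp, biprod.total, Category.id_comp,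
    e.hom_inv_id]

section Subcategory

variable {Λ : Type u} [Ring Λ] {P : ModuleCat.{u} Λ → Prop}
  {F : ObjectProperty.FullSubcategory P ⥤ AddCommGrpCat.{u}}

theorem exists_map_indecomposable [IsNoetherianRing Λ] (hsub : IsSubcat Λ P) [F.Additive]
    {X : ObjectProperty.FullSubcategory P} {x : F.obj X} (hx : x ≠ 0) :
    ∃ (Y : ObjectProperty.FullSubcategory P) (h : X ⟶ Y), Indecomposable Y.obj ∧ F.map h x ≠ 0 := by
  have : Module.Finite Λ X.obj := hsub.fg _ X.2
  obtain ⟨_, ⟨Y, q, hq, rfl, hqx⟩, hmax⟩ := set_has_maximal_iff_noetherian.mpr inferInstance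
    {N | ∃ (Y : ObjectProperty.FullSubcategory P) (q : X ⟶ Y),
      Epi q.hom ∧ LinearMap.ker q.hom.hom = N ∧ F.map q x ≠ 0}
    ⟨_, X, 𝟙 X, inferInstanceAs (Epi (𝟙 X.obj)), rfl, by simpa using hx⟩
  -- A proper quotient of `Y` in `𝒳` that kept `F.map q x` would have a larger kernel.
  have hquot : ∀ {A : ModuleCat Λ} (hA : P A) (p : Y.obj ⟶ A), Epi p → ¬Mono p →
      F.map (q ≫ ObjectProperty.homMk p : X ⟶ ⟨A, hA⟩) x = 0 := by
    intro A hA p hp hnp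
    by_contra hne
    exact hmax _ ⟨⟨A, hA⟩, q ≫ ObjectProperty.homMk p, epi_comp q.hom p, rfl, hne⟩
      (ker_lt_ker_comp_of_not_mono q.hom p hnp)
  refine ⟨Y, q, ⟨fun hY => hqx ?_, fun A B e => ?_⟩, hqx⟩
  · rw [show q = 0 from ObjectProperty.hom_ext _ (hY.eq_of_tgt _ _), F.map_zero]
    rfl
  by_contra! hAB
  have hA : P A := hsub.summand_closed Y.2 ⟨biprod.inl ≫ e.inv, e.hom ≫ biprod.fst, by simp⟩
  have hB : P B := hsub.summand_closed Y.2 ⟨biprod.inr ≫ e.inv, e.hom ≫ biprod.snd, by simp⟩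
  apply hqx
  refine eq_zero_of_map_eq_zero_of_add_eq_id F
    (p₁ := (ObjectProperty.homMk (e.hom ≫ biprod.fst) : Y ⟶ ⟨A, hA⟩))
    (i₁ := ObjectProperty.homMk (biprod.inl ≫ e.inv))
    (p₂ := (ObjectProperty.homMk (e.hom ≫ biprod.snd) : Y ⟶ ⟨B, hB⟩))
    (i₂ := ObjectProperty.homMk (biprod.inr ≫ e.inv)) ?_ ?_ ?_
  · ext1
    exact comp_biprod_inl_add_comp_biprod_inr e
  · rw [← ConcreteCategory.comp_apply, ← F.map_comp]
    exact hquot hA _ inferInstance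
      (not_mono_of_comp_eq_zero (j := biprod.inr ≫ e.inv) (r := e.hom ≫ biprod.snd)
        (by simp) (by simp) hAB.2)
  · rw [← ConcreteCategory.comp_apply, ← F.map_comp]
    exact hquot hB _ inferInstance
      (not_mono_of_comp_eq_zero (j := biprod.inl ≫ e.inv) (r := e.hom ≫ biprod.fst)
        (by simp) (by simp) hAB.1)

variable (F) in
structure IndecomposableElement where
  obj : ObjectProperty.FullSubcategory P
  elt : F.obj obj
  indecomposable : Indecomposable obj.obj
  elt_ne_zero : elt ≠ 0

theorem exists_not_isIso_of_not_isUniversallyMinimal [IsNoetherianRing Λ] (hsub : IsSubcat Λ P)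
    [F.Additive] (p : IndecomposableElement F) (hp : ¬IsUniversallyMinimal F p.obj p.elt) :
    ∃ (p' : IndecomposableElement F) (f : p.obj ⟶ p'.obj), F.map f p.elt = p'.elt ∧ ¬IsIso f := by
  obtain ⟨X', g, hg, hgy⟩ : ∃ (X' : ObjectProperty.FullSubcategory P) (g : p.obj ⟶ X'),
      (¬∃ r : X' ⟶ p.obj, g ≫ r = 𝟙 p.obj) ∧ F.map g p.elt ≠ 0 := by
    simpa [IsUniversallyMinimal, p.elt_ne_zero] using hp
  obtain ⟨Z, h, hZ, hz⟩ := exists_map_indecomposable hsub hgy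
  refine ⟨⟨Z, F.map (g ≫ h) p.elt, hZ, by simpa using hz⟩, g ≫ h, rfl, fun _ => hg ?_⟩
  exact ⟨h ≫ inv (g ≫ h), by rw [← Category.assoc, IsIso.hom_inv_id]⟩

end Subcategory

/-- If `Λ` is left noetherian, every family of morphisms between
indecomposable modules in `𝒳` is noetherian, and `F` is a non-zero `𝒳ᵒᵖ`-module, then
`F(X)` has a universally minimal element for some `X ∈ 𝒳`. -/
theorem statement3 {Λ : Type u} [Ring Λ] [IsNoetherianRing Λ]
    (P : ModuleCat.{u} Λ → Prop) (hsub : IsSubcat Λ P)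
    (hchains : HomChainsNoetherian P)
    (F : ObjectProperty.FullSubcategory P ⥤ AddCommGrpCat.{u}) (hF : F.Additive)
    (hne : ∃ (X : ObjectProperty.FullSubcategory P) (x : F.obj X), x ≠ 0) :
    ∃ (X : ObjectProperty.FullSubcategory P) (x : F.obj X), IsUniversallyMinimal F X x := by
  by_contra! hnone
  obtain ⟨X, x, hx⟩ := hne
  obtain ⟨Y, h, hY, hy⟩ := exists_map_indecomposable hsub hx
  choose next f hf hf_iso using fun p : IndecomposableElement F =>
    exists_not_isIso_of_not_isUniversallyMinimal hsub p (hnone _ _)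
  let s (n : ℕ) : IndecomposableElement F := Nat.rec ⟨Y, F.map h x, hY, hy⟩ (fun _ => next) n
  obtain ⟨n, hn⟩ := hchains (fun n => (s n).obj) (fun n => (s n).indecomposable) (fun n => f (s n))
    (chainComp_ne_zero F _ (fun n => hf (s n)) (fun n => (s n).elt_ne_zero))
  exact hf_iso (s n) (hn n le_rfl)

end Paper
end

section
/- Let Λ be a left artinian ring and let 𝒳 be a resolving subcategory of Λ-mod such that every family of morphisms between indecomposable modules in 𝒳 is noetherian. Then for each indecomposable non-projective left Λ-module X ∈ 𝒳 there is a right almost split morphism f: B → X in 𝒳. -/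
open CategoryTheory Limits

universe u

namespace Paper

/-! ### Auxiliary machinery -/

section Aux

variable {Λ : Type u} [Ring Λ]

lemma hom_apply_eq {A B : ModuleCat.{u} Λ} {f g : A ⟶ B} (h : f = g) (x : A) : f x = g x := by
  rw [h]

section ExactTools

variable {D E X V : ModuleCat.{u} Λ} (a : D ⟶ E) (p : E ⟶ X)

lemma factor_thru_coker (surj : Function.Surjective p)
    (exact : ∀ e, p e = 0 ↔ ∃ d, a d = e) (q : E ⟶ V) (hq : a ≫ q = 0) :
    ∃ h : X ⟶ V, p ≫ h = q := by
  have hle : LinearMap.ker p.hom ≤ LinearMap.ker q.hom := by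
    intro e he
    obtain ⟨d, rfl⟩ := (exact e).mp he
    exact hom_apply_eq hq d
  let eq : (↥E ⧸ LinearMap.ker p.hom) ≃ₗ[Λ] ↥X := p.hom.quotKerEquivOfSurjective surj
  refine ⟨ModuleCat.ofHom ((Submodule.liftQ _ q.hom hle).comp (eq.symm : ↥X →ₗ[Λ] _)), ?_⟩
  apply ModuleCat.hom_ext; apply LinearMap.ext; intro e
  have h1 : eq.symm (p e) = Submodule.Quotient.mk e := by
    rw [LinearEquiv.symm_apply_eq]; rfl
  show (Submodule.liftQ _ q.hom hle) (eq.symm (p e)) = q e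
  rw [h1]; rfl

lemma factor_thru_ker (inj : Function.Injective a)
    (exact : ∀ e, p e = 0 ↔ ∃ d, a d = e) (t : V ⟶ E) (ht : t ≫ p = 0) :
    ∃ u : V ⟶ D, u ≫ a = t := by
  have hmem : ∀ v : V, t v ∈ LinearMap.range a.hom := by
    intro v
    obtain ⟨d, hd⟩ := (exact (t v)).mp (hom_apply_eq ht v)
    exact ⟨d, hd⟩
  let ar : ↥D ≃ₗ[Λ] LinearMap.range a.hom := LinearEquiv.ofInjective a.hom inj
  refine ⟨ModuleCat.ofHom ((ar.symm : LinearMap.range a.hom →ₗ[Λ] ↥D).comp (LinearMap.codRestrict _ t.hom hmem)), ?_⟩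
  apply ModuleCat.hom_ext; apply LinearMap.ext; intro v
  show a (ar.symm ⟨t v, hmem v⟩) = t v
  have h2 : a (ar.symm ⟨t v, hmem v⟩) = (ar (ar.symm ⟨t v, hmem v⟩) : ↥E) := rfl
  rw [h2, LinearEquiv.apply_symm_apply]

lemma epi_cancel (surj : Function.Surjective p) {g h : X ⟶ V}
    (H : p ≫ g = p ≫ h) : g = h := by
  apply ModuleCat.hom_ext; apply LinearMap.ext; intro x
  obtain ⟨e, rfl⟩ := surj x
  exact hom_apply_eq H e

lemma mono_cancel (inj : Function.Injective a) {g h : V ⟶ D}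
    (H : g ≫ a = h ≫ a) : g = h := by
  apply ModuleCat.hom_ext; apply LinearMap.ext; intro v
  exact inj (hom_apply_eq H v)

lemma comp_eq_zero_of_exact (exact : ∀ e, p e = 0 ↔ ∃ d, a d = e) : a ≫ p = 0 := by
  apply ModuleCat.hom_ext; apply LinearMap.ext; intro d
  exact (exact (a d)).mpr ⟨d, rfl⟩

lemma sec_iff_retr (inj : Function.Injective a) (surj : Function.Surjective p)
    (exact : ∀ e, p e = 0 ↔ ∃ d, a d = e) :
    (∃ s : X ⟶ E, s ≫ p = 𝟙 X) ↔ (∃ r : E ⟶ D, a ≫ r = 𝟙 D) := by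
  have hap : a ≫ p = 0 := comp_eq_zero_of_exact a p exact
  constructor
  · rintro ⟨s, hs⟩
    have h0 : (𝟙 E - p ≫ s) ≫ p = 0 := by
      simp only [Preadditive.sub_comp, Category.id_comp, Category.assoc, hs, Category.comp_id,
        sub_self]
    obtain ⟨u, hu⟩ := factor_thru_ker a p inj exact _ h0
    refine ⟨u, mono_cancel a inj ?_⟩
    rw [Category.assoc, hu]
    simp only [Preadditive.comp_sub, Category.comp_id, Category.id_comp]
    rw [← Category.assoc, hap, zero_comp, sub_zero]
  · rintro ⟨r, hr⟩
    have h0 : a ≫ (𝟙 E - r ≫ a) = 0 := by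
      simp only [Preadditive.comp_sub, Category.comp_id, ← Category.assoc, hr,
        Category.id_comp, sub_self]
    obtain ⟨h, hh⟩ := factor_thru_coker a p surj exact _ h0
    refine ⟨h, epi_cancel p surj ?_⟩
    rw [← Category.assoc, hh]
    simp only [Preadditive.sub_comp, Category.id_comp, Category.comp_id, Category.assoc, hap,
      comp_zero, sub_zero]

end ExactTools

/-! ### Decompositions into indecomposables -/

/-- A finite decomposition of `M` into indecomposable direct summands. -/
def GoodDec (M : ModuleCat.{u} Λ) : Prop :=
  ∃ (σ : Type) (_ : Fintype σ) (C : σ → ModuleCat.{u} Λ) (ι : ∀ b, C b ⟶ M)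
    (π : ∀ b, M ⟶ C b),
    (∀ b, Indecomposable (C b)) ∧ (∀ b, ι b ≫ π b = 𝟙 (C b)) ∧
    (∑ b, π b ≫ ι b) = 𝟙 M

lemma gooddec_of_subsingleton (M : ModuleCat.{u} Λ) [h : Subsingleton ↥M] : GoodDec M := by
  refine ⟨PEmpty, inferInstance, fun b => b.elim, fun b => b.elim, fun b => b.elim,
    fun b => b.elim, fun b => b.elim, ?_⟩
  simp only [Finset.univ_eq_empty, Finset.sum_empty]
  apply ModuleCat.hom_ext; apply LinearMap.ext; intro x
  exact Subsingleton.elim _ _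

lemma gooddec_of_indec (M : ModuleCat.{u} Λ) (h : Indecomposable M) : GoodDec M :=
  ⟨PUnit, inferInstance, fun _ => M, fun _ => 𝟙 M, fun _ => 𝟙 M, fun _ => h,
    fun _ => Category.id_comp _, by simp⟩

lemma gooddec_of_equiv {M N : ModuleCat.{u} Λ} (e : ↥M ≃ₗ[Λ] ↥N) (h : GoodDec M) :
    GoodDec N := by
  obtain ⟨σ, _, C, ι, π, hind, hid, hsum⟩ := h
  let f : M ⟶ N := ModuleCat.ofHom e.toLinearMap
  let g : N ⟶ M := ModuleCat.ofHom e.symm.toLinearMap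
  have hfg : f ≫ g = 𝟙 M := ModuleCat.hom_ext (LinearMap.ext fun x => e.symm_apply_apply x)
  have hgf : g ≫ f = 𝟙 N := ModuleCat.hom_ext (LinearMap.ext fun x => e.apply_symm_apply x)
  refine ⟨σ, inferInstance, C, fun b => ι b ≫ f, fun b => g ≫ π b, hind, ?_, ?_⟩
  · intro b
    rw [Category.assoc, ← Category.assoc f, hfg, Category.id_comp, hid]
  · calc (∑ b, (g ≫ π b) ≫ (ι b ≫ f)) = ∑ b, g ≫ ((π b ≫ ι b) ≫ f) := by
          simp [Category.assoc]
      _ = g ≫ (∑ b, (π b ≫ ι b) ≫ f) := by rw [Preadditive.comp_sum]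
      _ = g ≫ ((∑ b, π b ≫ ι b) ≫ f) := by rw [Preadditive.sum_comp]
      _ = 𝟙 N := by rw [hsum, Category.id_comp, hgf]

/-- glue decompositions along a biproduct-like system -/
lemma gooddec_glue {Y Z M : ModuleCat.{u} Λ} (ι₁ : Y ⟶ M) (π₁ : M ⟶ Y) (ι₂ : Z ⟶ M)
    (π₂ : M ⟶ Z) (h1 : ι₁ ≫ π₁ = 𝟙 Y) (h2 : ι₂ ≫ π₂ = 𝟙 Z)
    (hsum : π₁ ≫ ι₁ + π₂ ≫ ι₂ = 𝟙 M) (hY : GoodDec Y) (hZ : GoodDec Z) : GoodDec M := by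
  obtain ⟨σ₁, _, C₁, u₁, q₁, hi₁, hd₁, hs₁⟩ := hY
  obtain ⟨σ₂, _, C₂, u₂, q₂, hi₂, hd₂, hs₂⟩ := hZ
  refine ⟨σ₁ ⊕ σ₂, inferInstance, Sum.elim C₁ C₂,
    fun b => match b with
      | .inl i => u₁ i ≫ ι₁
      | .inr i => u₂ i ≫ ι₂,
    fun b => match b with
      | .inl i => π₁ ≫ q₁ i
      | .inr i => π₂ ≫ q₂ i, ?_, ?_, ?_⟩
  · rintro (i | i)
    exacts [hi₁ i, hi₂ i]
  · rintro (i | i)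
    · show (u₁ i ≫ ι₁) ≫ (π₁ ≫ q₁ i) = 𝟙 (C₁ i)
      rw [Category.assoc, ← Category.assoc ι₁, h1, Category.id_comp, hd₁]
    · show (u₂ i ≫ ι₂) ≫ (π₂ ≫ q₂ i) = 𝟙 (C₂ i)
      rw [Category.assoc, ← Category.assoc ι₂, h2, Category.id_comp, hd₂]
  · rw [Fintype.sum_sum_type]
    have e1 : (∑ i : σ₁, (π₁ ≫ q₁ i) ≫ (u₁ i ≫ ι₁)) = π₁ ≫ ι₁ := by
      calc (∑ i : σ₁, (π₁ ≫ q₁ i) ≫ (u₁ i ≫ ι₁)) = ∑ i, π₁ ≫ ((q₁ i ≫ u₁ i) ≫ ι₁) := by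
            simp [Category.assoc]
        _ = π₁ ≫ (∑ i, (q₁ i ≫ u₁ i) ≫ ι₁) := by rw [Preadditive.comp_sum]
        _ = π₁ ≫ ((∑ i, q₁ i ≫ u₁ i) ≫ ι₁) := by rw [Preadditive.sum_comp]
        _ = π₁ ≫ ι₁ := by rw [hs₁, Category.id_comp]
    have e2 : (∑ i : σ₂, (π₂ ≫ q₂ i) ≫ (u₂ i ≫ ι₂)) = π₂ ≫ ι₂ := by
      calc (∑ i : σ₂, (π₂ ≫ q₂ i) ≫ (u₂ i ≫ ι₂)) = ∑ i, π₂ ≫ ((q₂ i ≫ u₂ i) ≫ ι₂) := by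
            simp [Category.assoc]
        _ = π₂ ≫ (∑ i, (q₂ i ≫ u₂ i) ≫ ι₂) := by rw [Preadditive.comp_sum]
        _ = π₂ ≫ ((∑ i, q₂ i ≫ u₂ i) ≫ ι₂) := by rw [Preadditive.sum_comp]
        _ = π₂ ≫ ι₂ := by rw [hs₂, Category.id_comp]
    exact (congrArg₂ (· + ·) e1 e2).trans hsum

lemma subsingleton_of_isZero {M : ModuleCat.{u} Λ} (h : IsZero M) : Subsingleton ↥M := by
  have h1 : (𝟙 M : M ⟶ M) = 0 := h.eq_of_src _ _
  have key : ∀ z : ↥M, z = 0 := by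
    intro z
    calc z = (𝟙 M : M ⟶ M) z := rfl
      _ = (0 : M ⟶ M) z := by rw [h1]
      _ = 0 := rfl
  exact ⟨fun x y => (key x).trans (key y).symm⟩

lemma gooddec_total (M : ModuleCat.{u} Λ) [IsArtinian Λ ↥M] : GoodDec M := by
  by_contra h0
  let s : Set (Submodule Λ ↥M) :=
    {N | (∃ e : ↥M →ₗ[Λ] ↥M, e ∘ₗ e = e ∧ LinearMap.range e = N) ∧
      ¬ GoodDec (ModuleCat.of Λ ↥N)}
  have hMs : ⊤ ∈ s := by
    refine ⟨⟨LinearMap.id, rfl, LinearMap.range_id⟩, fun hg => ?_⟩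
    exact h0 (gooddec_of_equiv (Submodule.topEquiv) hg)
  obtain ⟨N, hNs, hmin⟩ := IsArtinian.set_has_minimal s ⟨⊤, hMs⟩
  obtain ⟨⟨e, he2, herange⟩, hNg⟩ := hNs
  set Nc := ModuleCat.of Λ ↥N with hNc
  have hefix : ∀ x : ↥M, x ∈ N → e x = x := by
    intro x hx
    rw [← herange] at hx
    obtain ⟨y, rfl⟩ := hx
    exact LinearMap.ext_iff.mp he2 y
  let j : Nc ⟶ M := ModuleCat.ofHom N.subtype
  let q : M ⟶ Nc := ModuleCat.ofHom (LinearMap.codRestrict N e (fun x => herange ▸ LinearMap.mem_range_self e x))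
  have hjq : j ≫ q = 𝟙 Nc := ModuleCat.hom_ext (LinearMap.ext fun (x : ↥N) => Subtype.ext (hefix x.1 x.2))
  have hinj_j : Function.Injective j := Subtype.val_injective
  have hNbot : N ≠ ⊥ := by
    intro h
    apply hNg
    haveI : Subsingleton ↥N := by
      constructor
      rintro ⟨a, ha⟩ ⟨b, hb⟩
      rw [h, Submodule.mem_bot] at ha hb
      exact Subtype.ext (ha.trans hb.symm)
    exact @gooddec_of_subsingleton Λ _ (ModuleCat.of Λ ↥N) this
  have hNZ : ¬ IsZero Nc := by
    intro h
    apply hNbot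
    have hss := subsingleton_of_isZero h
    ext x
    simp only [Submodule.mem_bot]
    constructor
    · intro hx
      have : (⟨x, hx⟩ : ↥N) = ⟨0, N.zero_mem⟩ := @Subsingleton.elim _ hss _ _
      exact congrArg Subtype.val this
    · rintro rfl; exact N.zero_mem
  have hNind : ¬ Indecomposable Nc := fun h => hNg (gooddec_of_indec _ h)
  rw [Indecomposable, not_and] at hNind
  have h3 := hNind hNZ
  push_neg at h3
  obtain ⟨Y, Z, iso, hY, hZ⟩ := h3
  let iY' : Y ⟶ Nc := biprod.inl ≫ iso.inv
  let pY' : Nc ⟶ Y := iso.hom ≫ biprod.fst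
  let iZ' : Z ⟶ Nc := biprod.inr ≫ iso.inv
  let pZ' : Nc ⟶ Z := iso.hom ≫ biprod.snd
  have hY1 : iY' ≫ pY' = 𝟙 Y := by simp [iY', pY']
  have hZ1 : iZ' ≫ pZ' = 𝟙 Z := by simp [iZ', pZ']
  have hYZ : iY' ≫ pZ' = 0 := by simp [iY', pZ']
  have hZY : iZ' ≫ pY' = 0 := by simp [iZ', pY']
  have hsum' : pY' ≫ iY' + pZ' ≫ iZ' = 𝟙 Nc := by
    have step : pY' ≫ iY' + pZ' ≫ iZ'
        = iso.hom ≫ (biprod.fst ≫ biprod.inl + biprod.snd ≫ biprod.inr) ≫ iso.inv := by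
      simp only [pY', iY', pZ', iZ', Preadditive.comp_add, Preadditive.add_comp, Category.assoc]
    rw [step, biprod.total, Category.id_comp, iso.hom_inv_id]
  let iY : Y ⟶ M := iY' ≫ j
  let pY : M ⟶ Y := q ≫ pY'
  let iZ : Z ⟶ M := iZ' ≫ j
  let pZ : M ⟶ Z := q ≫ pZ'
  have hYM : iY ≫ pY = 𝟙 Y := by
    show (iY' ≫ j) ≫ (q ≫ pY') = 𝟙 Y
    rw [Category.assoc, ← Category.assoc j, hjq, Category.id_comp, hY1]
  have hZM : iZ ≫ pZ = 𝟙 Z := by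
    show (iZ' ≫ j) ≫ (q ≫ pZ') = 𝟙 Z
    rw [Category.assoc, ← Category.assoc j, hjq, Category.id_comp, hZ1]
  have hYZM : iY ≫ pZ = 0 := by
    show (iY' ≫ j) ≫ (q ≫ pZ') = 0
    rw [Category.assoc, ← Category.assoc j, hjq, Category.id_comp, hYZ]
  have hZYM : iZ ≫ pY = 0 := by
    show (iZ' ≫ j) ≫ (q ≫ pY') = 0
    rw [Category.assoc, ← Category.assoc j, hjq, Category.id_comp, hZY]
  let E₁ : M ⟶ M := pY ≫ iY
  let E₂ : M ⟶ M := pZ ≫ iZ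
  have hE1idem : E₁.hom ∘ₗ E₁.hom = E₁.hom := by
    refine congrArg ModuleCat.Hom.hom (?_ : (E₁ ≫ E₁ : M ⟶ M) = E₁)
    show (pY ≫ iY) ≫ (pY ≫ iY) = pY ≫ iY
    rw [Category.assoc, ← Category.assoc iY, hYM, Category.id_comp]
  have hE2idem : E₂.hom ∘ₗ E₂.hom = E₂.hom := by
    refine congrArg ModuleCat.Hom.hom (?_ : (E₂ ≫ E₂ : M ⟶ M) = E₂)
    show (pZ ≫ iZ) ≫ (pZ ≫ iZ) = pZ ≫ iZ
    rw [Category.assoc, ← Category.assoc iZ, hZM, Category.id_comp]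
  have hE12 : (E₁ ≫ E₂ : M ⟶ M) = 0 := by
    show (pY ≫ iY) ≫ (pZ ≫ iZ) = 0
    rw [Category.assoc, ← Category.assoc iY, hYZM, zero_comp, comp_zero]
  have hE21 : (E₂ ≫ E₁ : M ⟶ M) = 0 := by
    show (pZ ≫ iZ) ≫ (pY ≫ iY) = 0
    rw [Category.assoc, ← Category.assoc iZ, hZYM, zero_comp, comp_zero]
  let N₁ := LinearMap.range E₁.hom
  let N₂ := LinearMap.range E₂.hom
  have hN1le : N₁ ≤ N := by
    rintro x ⟨m, rfl⟩
    show iY (pY m) ∈ N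
    show j (iY' (pY m)) ∈ N
    exact (iY' (pY m)).2
  have hN2le : N₂ ≤ N := by
    rintro x ⟨m, rfl⟩
    show iZ (pZ m) ∈ N
    show j (iZ' (pZ m)) ∈ N
    exact (iZ' (pZ m)).2
  have key : ∀ x : ↥M, x ∈ N₁ → x ∈ N₂ → x = 0 := by
    rintro x ⟨m₁, rfl⟩ hx2
    obtain ⟨m₂, hm₂⟩ := hx2
    have h1 : E₂ (E₁ m₁) = 0 := hom_apply_eq hE12 m₁
    have h2 : E₂ (E₂ m₂) = E₂ m₂ := LinearMap.ext_iff.mp hE2idem m₂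
    calc E₁ m₁ = E₂ m₂ := hm₂.symm
      _ = E₂ (E₂ m₂) := h2.symm
      _ = E₂ (E₁ m₁) := by rw [hm₂]
      _ = 0 := h1
  have hiYN1 : ∀ y : ↥Y, iY y ∈ N₁ := by
    intro y
    refine ⟨iY y, ?_⟩
    show iY (pY (iY y)) = iY y
    have : pY (iY y) = y := hom_apply_eq hYM y
    rw [this]
  have hiZN2 : ∀ z : ↥Z, iZ z ∈ N₂ := by
    intro z
    refine ⟨iZ z, ?_⟩
    show iZ (pZ (iZ z)) = iZ z
    have : pZ (iZ z) = z := hom_apply_eq hZM z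
    rw [this]
  have hN1lt : N₁ < N := by
    refine lt_of_le_of_ne hN1le (fun hEq => ?_)
    apply hZ
    haveI : Subsingleton ↥Z := by
      constructor
      intro z z'
      have hz : ∀ w : ↥Z, iZ w = 0 := by
        intro w
        exact key _ (hEq ▸ hN2le (hiZN2 w)) (hiZN2 w)
      have inj : Function.Injective iZ := by
        intro u v huv
        have h3 : pZ (iZ u) = u := hom_apply_eq hZM u
        have h4 : pZ (iZ v) = v := hom_apply_eq hZM v
        rw [← h3, ← h4, huv]
      exact inj ((hz z).trans (hz z').symm)
    exact ModuleCat.isZero_of_subsingleton _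
  have hN2lt : N₂ < N := by
    refine lt_of_le_of_ne hN2le (fun hEq => ?_)
    apply hY
    haveI : Subsingleton ↥Y := by
      constructor
      intro z z'
      have hz : ∀ w : ↥Y, iY w = 0 := by
        intro w
        exact key _ (hiYN1 w) (hEq ▸ hN1le (hiYN1 w))
      have inj : Function.Injective iY := by
        intro u v huv
        have h3 : pY (iY u) = u := hom_apply_eq hYM u
        have h4 : pY (iY v) = v := hom_apply_eq hYM v
        rw [← h3, ← h4, huv]
      exact inj ((hz z).trans (hz z').symm)
    exact ModuleCat.isZero_of_subsingleton _
  have hGood1 : GoodDec (ModuleCat.of Λ ↥N₁) := by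
    by_contra hg
    exact hmin N₁ ⟨⟨E₁.hom, hE1idem, rfl⟩, hg⟩ hN1lt
  have hGood2 : GoodDec (ModuleCat.of Λ ↥N₂) := by
    by_contra hg
    exact hmin N₂ ⟨⟨E₂.hom, hE2idem, rfl⟩, hg⟩ hN2lt
  have hGoodY : GoodDec Y := by
    refine gooddec_of_equiv (M := ModuleCat.of Λ ↥N₁) ?_ hGood1
    refine (LinearEquiv.ofBijective (LinearMap.codRestrict N₁ iY.hom hiYN1)
      ⟨?_, ?_⟩).symm
    · intro u v huv
      have h0 : (LinearMap.codRestrict N₁ iY.hom hiYN1 u).val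
          = (LinearMap.codRestrict N₁ iY.hom hiYN1 v).val := by rw [huv]
      have h1 : iY u = iY v := h0
      have h3 : pY (iY u) = u := hom_apply_eq hYM u
      have h4 : pY (iY v) = v := hom_apply_eq hYM v
      rw [← h3, ← h4, h1]
    · rintro ⟨x, m, rfl⟩
      refine ⟨pY m, ?_⟩
      apply Subtype.ext
      show iY (pY m) = E₁ m
      rfl
  have hGoodZ : GoodDec Z := by
    refine gooddec_of_equiv (M := ModuleCat.of Λ ↥N₂) ?_ hGood2
    refine (LinearEquiv.ofBijective (LinearMap.codRestrict N₂ iZ.hom hiZN2)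
      ⟨?_, ?_⟩).symm
    · intro u v huv
      have h0 : (LinearMap.codRestrict N₂ iZ.hom hiZN2 u).val
          = (LinearMap.codRestrict N₂ iZ.hom hiZN2 v).val := by rw [huv]
      have h1 : iZ u = iZ v := h0
      have h3 : pZ (iZ u) = u := hom_apply_eq hZM u
      have h4 : pZ (iZ v) = v := hom_apply_eq hZM v
      rw [← h3, ← h4, h1]
    · rintro ⟨x, m, rfl⟩
      refine ⟨pZ m, ?_⟩
      apply Subtype.ext
      show iZ (pZ m) = E₂ m
      rfl
  exact hNg (gooddec_glue iY' pY' iZ' pZ' hY1 hZ1 hsum' hGoodY hGoodZ)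

end Aux

/-! ### Selection of a component through which a map does not extend -/

section Select

variable {Λ : Type u} [Ring Λ] [IsArtinianRing Λ] {P : ModuleCat.{u} Λ → Prop}

lemma select (hsub : IsSubcat Λ P) {Z D E : ModuleCat.{u} Λ} (hZ : P Z)
    (a : D ⟶ E) (w : D ⟶ Z) (hne : ¬∃ ψ : E ⟶ Z, a ≫ ψ = w) :
    ∃ (C : ModuleCat.{u} Λ) (π : Z ⟶ C), P C ∧ Indecomposable C ∧
      ¬∃ φ : E ⟶ C, a ≫ φ = w ≫ π := by
  haveI : Module.Finite Λ ↥Z := hsub.fg Z hZ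
  haveI : IsArtinian Λ ↥Z := inferInstance
  obtain ⟨σ, _, C, ι, π, hind, hid, hsum⟩ := gooddec_total Z
  by_contra hcon
  push_neg at hcon
  have hP : ∀ b, P (C b) := fun b => hsub.summand_closed hZ ⟨ι b, π b, hid b⟩
  have hφ : ∀ b, ∃ φ : E ⟶ C b, a ≫ φ = w ≫ π b := fun b =>
    hcon (C b) (π b) (hP b) (hind b)
  choose φ hφ using hφ
  apply hne
  refine ⟨∑ b, φ b ≫ ι b, ?_⟩
  calc a ≫ ∑ b, φ b ≫ ι b = ∑ b, a ≫ (φ b ≫ ι b) := by rw [Preadditive.comp_sum]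
    _ = ∑ b, (w ≫ π b) ≫ ι b := by
        refine Finset.sum_congr rfl (fun b _ => ?_)
        rw [← Category.assoc, hφ b]
    _ = ∑ b, w ≫ (π b ≫ ι b) := by simp [Category.assoc]
    _ = w ≫ ∑ b, π b ≫ ι b := by rw [Preadditive.comp_sum]
    _ = w := by rw [hsum, Category.comp_id]

end Select

/-! ### Nilpotency of non-isomorphisms, from the chain condition -/

section Nilp

variable {Λ : Type u} [Ring Λ] {P : ModuleCat.{u} Λ → Prop}

/-- iterated composition of an endomorphism -/
def powHom {X : ModuleCat.{u} Λ} (e : X ⟶ X) : ℕ → (X ⟶ X)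
  | 0 => 𝟙 X
  | (m + 1) => powHom e m ≫ e

lemma nilpotent_of_not_isIso (hchains : HomChainsNoetherian P) {X : ModuleCat.{u} Λ}
    (hX : P X) (hind : Indecomposable X) (e : X ⟶ X) (he : ¬IsIso e) :
    ∃ m : ℕ, powHom e m = 0 := by
  let Xc : ℕ → ObjectProperty.FullSubcategory P := fun _ => ⟨X, hX⟩
  let f : ∀ i, Xc i ⟶ Xc (i + 1) := fun _ => ObjectProperty.homMk e
  let cc : ∀ i, X ⟶ X := fun i => (chainComp f i).hom
  have hpt : ∀ i, cc i = powHom e i := by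
    intro i
    induction i with
    | zero => rfl
    | succ i ih =>
      show cc i ≫ e = powHom e i ≫ e
      rw [ih]
  by_contra hcon
  push_neg at hcon
  have hnz : ∀ i, chainComp f i ≠ 0 := by
    intro i h0
    apply hcon i
    rw [← hpt i]
    show (chainComp f i).hom = 0; rw [h0]; rfl
  obtain ⟨n, hn⟩ := hchains Xc (fun _ => hind) f hnz
  have h1 : IsIso (f n) := hn n le_rfl
  have h2 : IsIso ((ObjectProperty.ι P).map (f n)) := inferInstance
  exact he h2

end Nilp

/-! ### Pushout step -/

section Push

variable {Λ : Type u} [Ring Λ] {P : ModuleCat.{u} Λ → Prop}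

/-- Pushing out a short exact sequence `0 → A → E → X → 0` along `u : A → C`. -/
lemma push (hres : IsResolving P) {A E C X : ModuleCat.{u} Λ}
    (a : A ⟶ E) (p : E ⟶ X) (inj : Function.Injective a) (surj : Function.Surjective p)
    (exact : ∀ e, p e = 0 ↔ ∃ d, a d = e) (u : A ⟶ C) (hPC : P C) (hPX : P X)
    (hne : ¬∃ φ : E ⟶ C, a ≫ φ = u) :
    ∃ (E' : ModuleCat.{u} Λ) (a' : C ⟶ E') (p' : E' ⟶ X) (c : E ⟶ E'),
      P E' ∧ Function.Injective a' ∧ Function.Surjective p' ∧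
      (∀ e', p' e' = 0 ↔ ∃ z, a' z = e') ∧ (¬∃ r : E' ⟶ C, a' ≫ r = 𝟙 C) ∧
      a ≫ c = u ≫ a' ∧ c ≫ p' = p := by
  classical
  let ua : ↥A →ₗ[Λ] ↥C × ↥E := LinearMap.prod u.hom (-a.hom)
  let N : Submodule Λ (↥C × ↥E) := LinearMap.range ua
  let E' : ModuleCat.{u} Λ := ModuleCat.of Λ ((↥C × ↥E) ⧸ N)
  let mk : ↥C × ↥E →ₗ[Λ] ((↥C × ↥E) ⧸ N) := N.mkQ
  let a' : C ⟶ E' := ModuleCat.ofHom (mk.comp (LinearMap.inl Λ ↥C ↥E))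
  let c : E ⟶ E' := ModuleCat.ofHom (mk.comp (LinearMap.inr Λ ↥C ↥E))
  have hq0 : ∀ d : ↥A, ((LinearMap.coprod (0 : ↥C →ₗ[Λ] ↥X) p.hom)) (ua d) = 0 := by
    intro d
    show (0 : ↥C →ₗ[Λ] ↥X) (u d) + p (-(a d)) = 0
    rw [LinearMap.zero_apply, map_neg, zero_add, neg_eq_zero]
    exact (exact (a d)).mpr ⟨d, rfl⟩
  have hle : N ≤ LinearMap.ker (LinearMap.coprod (0 : ↥C →ₗ[Λ] ↥X) p.hom) := by
    rintro x ⟨d, rfl⟩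
    exact hq0 d
  let p' : E' ⟶ X := ModuleCat.ofHom (Submodule.liftQ N (LinearMap.coprod 0 p.hom) hle)
  have hmk : ∀ z : ↥C × ↥E, p' (mk z) = p z.2 := by
    intro z
    show (LinearMap.coprod (0 : ↥C →ₗ[Λ] ↥X) p.hom) z = p z.2
    show (0 : ↥C →ₗ[Λ] ↥X) z.1 + p z.2 = p z.2
    rw [LinearMap.zero_apply, zero_add]
  have hmkeq : ∀ z w : ↥C × ↥E, (∃ d, (u d, -(a d)) = z - w) → mk z = mk w := by
    intro z w ⟨d, hd⟩
    rw [← sub_eq_zero, ← map_sub]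
    exact (Submodule.Quotient.mk_eq_zero N).mpr ⟨d, hd⟩
  -- c ∘ a = a' ∘ u
  have hac : a ≫ c = u ≫ a' := by
    apply ModuleCat.hom_ext; apply LinearMap.ext; intro d
    show mk (0, a d) = mk (u d, 0)
    apply hmkeq
    refine ⟨-d, ?_⟩
    show (u (-d), -(a (-d))) = (0 - u d, a d - 0)
    rw [map_neg, map_neg, neg_neg, zero_sub, sub_zero]
  have hcp : c ≫ p' = p := by
    apply ModuleCat.hom_ext; apply LinearMap.ext; intro e
    exact hmk (0, e)
  have ha'inj : Function.Injective a' := by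
    intro z z' hzz
    have h1 : mk (z, 0) = mk (z', 0) := hzz
    rw [← sub_eq_zero, ← map_sub] at h1
    have h2 : ((z, (0 : ↥E)) - (z', (0 : ↥E))) ∈ N := (Submodule.Quotient.mk_eq_zero N).mp h1
    obtain ⟨d, hd⟩ := h2
    have hd1 : u d = z - z' := congrArg Prod.fst hd
    have hd2 : -(a d) = (0 : ↥E) - 0 := congrArg Prod.snd hd
    rw [sub_zero] at hd2
    have hd3 : d = 0 := by
      apply inj
      rw [map_zero, ← neg_eq_zero]
      exact hd2
    rw [hd3, map_zero] at hd1
    rw [← sub_eq_zero, ← hd1]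
  have hp'surj : Function.Surjective p' := by
    intro x
    obtain ⟨e, rfl⟩ := surj x
    exact ⟨mk (0, e), hmk (0, e)⟩
  have hexact' : ∀ e' : ↥E', p' e' = 0 ↔ ∃ z, a' z = e' := by
    intro e'
    obtain ⟨z, rfl⟩ := Submodule.mkQ_surjective N e'
    constructor
    · intro h0
      have h1 : p z.2 = 0 := by rw [← hmk z]; exact h0
      obtain ⟨d, hd⟩ := (exact z.2).mp h1
      refine ⟨z.1 + u d, ?_⟩
      show mk (z.1 + u d, 0) = mk z
      apply hmkeq
      refine ⟨d, ?_⟩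
      show (u d, -(a d)) = (z.1 + u d - z.1, 0 - z.2)
      rw [add_sub_cancel_left, zero_sub, hd]
    · rintro ⟨z', hz⟩
      have h1 : p' (mk z) = p' (a' z') := by rw [hz]
      rw [h1]
      calc p' (a' z') = p ((z', (0 : ↥E)).2) := hmk (z', 0)
        _ = 0 := map_zero p.hom
  have hns : ¬∃ r : E' ⟶ C, a' ≫ r = 𝟙 C := by
    rintro ⟨r, hr⟩
    apply hne
    refine ⟨c ≫ r, ?_⟩
    apply ModuleCat.hom_ext; apply LinearMap.ext; intro d
    show r (c (a d)) = u d
    have h1 : c (a d) = a' (u d) := hom_apply_eq hac d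
    rw [h1]
    exact hom_apply_eq hr (u d)
  have hPE' : P E' := hres.ext_closed a' p' ha'inj hp'surj hexact' hPC hPX
  exact ⟨E', a', p', c, hPE', ha'inj, hp'surj, hexact', hns, hac, hcp⟩

end Push

/-! ### The inductive step -/

section Step

variable {Λ : Type u} [Ring Λ] [IsArtinianRing Λ] {P : ModuleCat.{u} Λ → Prop}

lemma step_exists (hsub : IsSubcat Λ P) (hres : IsResolving P)
    (hchains : HomChainsNoetherian P) {X : ModuleCat.{u} Λ} (hX : P X)
    (hXind : Indecomposable X) {D E : ModuleCat.{u} Λ}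
    (hD : P D) (hE : P E) (hDind : Indecomposable D)
    (a : D ⟶ E) (p : E ⟶ X) (inj : Function.Injective a) (surj : Function.Surjective p)
    (exact : ∀ e, p e = 0 ↔ ∃ d, a d = e) (ns : ¬∃ r : E ⟶ D, a ≫ r = 𝟙 D)
    {Y : ModuleCat.{u} Λ} (hY : P Y) (g : Y ⟶ X)
    (hsmall : ¬∃ s : X ⟶ Y, s ≫ g = 𝟙 X) (hnl : ¬∃ h : Y ⟶ E, h ≫ p = g) :
    ∃ (D' E' : ModuleCat.{u} Λ) (v : D ⟶ D') (a' : D' ⟶ E') (p' : E' ⟶ X) (c : E ⟶ E'),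
      P D' ∧ P E' ∧ Indecomposable D' ∧ (¬IsIso v) ∧ Function.Injective a' ∧
      Function.Surjective p' ∧ (∀ e', p' e' = 0 ↔ ∃ z, a' z = e') ∧
      (¬∃ r : E' ⟶ D', a' ≫ r = 𝟙 D') ∧ a ≫ c = v ≫ a' ∧ c ≫ p' = p := by
  classical
  -- the pullback of p along g
  let qf : ↥E × ↥Y →ₗ[Λ] ↥X :=
    LinearMap.coprod p.hom (-g.hom)
  let Zs : Submodule Λ (↥E × ↥Y) := LinearMap.ker qf
  let Z : ModuleCat.{u} Λ := ModuleCat.of Λ ↥Zs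
  have hZmem : ∀ z : ↥Zs, p (z : ↥E × ↥Y).1 = g (z : ↥E × ↥Y).2 := by
    rintro ⟨⟨e, y⟩, hz⟩
    have h1 : p e + -(g y) = 0 := hz
    rw [← sub_eq_zero]
    rw [sub_eq_add_neg]
    exact h1
  let w : D ⟶ Z := ModuleCat.ofHom <| LinearMap.codRestrict Zs
    (LinearMap.prod a.hom 0)
    (by
      intro d
      show p (a d) + -(g 0) = 0
      rw [map_zero, neg_zero, add_zero]
      exact (exact (a d)).mpr ⟨d, rfl⟩)
  let piY : Z ⟶ Y := ModuleCat.ofHom ((LinearMap.snd Λ ↥E ↥Y).comp Zs.subtype)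
  let piE : Z ⟶ E := ModuleCat.ofHom ((LinearMap.fst Λ ↥E ↥Y).comp Zs.subtype)
  have hwinj : Function.Injective w := by
    intro d d' hdd
    apply inj
    have h1 : piE (w d) = piE (w d') := by rw [hdd]
    exact h1
  have hpiYsurj : Function.Surjective piY := by
    intro y
    obtain ⟨e, he⟩ := surj (g y)
    refine ⟨⟨(e, y), ?_⟩, rfl⟩
    show p e + -(g y) = 0
    rw [he, add_neg_cancel]
  have hexactZ : ∀ z : ↥Z, piY z = 0 ↔ ∃ d, w d = z := by
    rintro ⟨⟨e, y⟩, hz⟩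
    constructor
    · intro h0
      have hy : y = 0 := h0
      have hpe : p e = 0 := by
        have h1 : p e + -(g y) = 0 := hz
        rw [hy, map_zero, neg_zero, add_zero] at h1
        exact h1
      obtain ⟨d, hd⟩ := (exact e).mp hpe
      refine ⟨d, ?_⟩
      apply Subtype.ext
      show (a d, (0 : ↥Y)) = (e, y)
      rw [hd, hy]
    · rintro ⟨d, hd⟩
      have h1 : piY (w d) = piY ⟨(e, y), hz⟩ := by rw [hd]
      have h2 : (0 : ↥Y) = y := h1
      exact h2.symm
  have hPZ : P Z := hres.ext_closed w piY hwinj hpiYsurj hexactZ hD hY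
  -- Claim 1 : w does not extend over E
  have hne : ¬∃ ψ : E ⟶ Z, a ≫ ψ = w := by
    rintro ⟨ψ, hψ⟩
    let ψ₁ : E ⟶ E := ψ ≫ piE
    let ψ₂ : E ⟶ Y := ψ ≫ piY
    have hpg : ∀ x : ↥E, p (ψ₁ x) = g (ψ₂ x) := fun x => hZmem (ψ x)
    have hψ₁a : a ≫ ψ₁ = a := by
      apply ModuleCat.hom_ext; apply LinearMap.ext; intro d
      show piE (ψ (a d)) = a d
      have h1 : ψ (a d) = w d := hom_apply_eq hψ d
      rw [h1]
      rfl
    have hψ₂a : a ≫ ψ₂ = 0 := by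
      apply ModuleCat.hom_ext; apply LinearMap.ext; intro d
      show piY (ψ (a d)) = 0
      have h1 : ψ (a d) = w d := hom_apply_eq hψ d
      rw [h1]
      rfl
    obtain ⟨h, hh⟩ := factor_thru_coker a p surj exact ψ₂ hψ₂a
    let e₀ : X ⟶ X := h ≫ g
    have he₀ : ¬IsIso e₀ := by
      intro hiso
      apply hsmall
      refine ⟨inv e₀ ≫ h, ?_⟩
      rw [Category.assoc]
      exact IsIso.inv_hom_id e₀
    obtain ⟨m, hm⟩ := nilpotent_of_not_isIso hchains hX hXind e₀ he₀
    -- powers of ψ₁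
    have hpow1 : ∀ k, a ≫ powHom ψ₁ k = a := by
      intro k
      induction k with
      | zero => exact Category.comp_id a
      | succ k ih =>
        show a ≫ (powHom ψ₁ k ≫ ψ₁) = a
        rw [← Category.assoc, ih, hψ₁a]
    have hpow2 : ∀ k, powHom ψ₁ k ≫ p = p ≫ powHom e₀ k := by
      intro k
      induction k with
      | zero =>
        show 𝟙 E ≫ p = p ≫ 𝟙 X
        rw [Category.id_comp, Category.comp_id]
      | succ k ih =>
        show (powHom ψ₁ k ≫ ψ₁) ≫ p = p ≫ (powHom e₀ k ≫ e₀)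
        have hstep : ψ₁ ≫ p = p ≫ e₀ := by
          apply ModuleCat.hom_ext; apply LinearMap.ext; intro x
          show p (ψ₁ x) = e₀ (p x)
          rw [hpg x]
          show g (ψ₂ x) = g (h (p x))
          have h2 : ψ₂ x = h (p x) := (hom_apply_eq hh x).symm
          rw [h2]
        rw [Category.assoc, hstep, ← Category.assoc, ih, Category.assoc]
    have ht0 : powHom ψ₁ m ≫ p = 0 := by
      rw [hpow2 m, hm, comp_zero]
    obtain ⟨χ, hχ⟩ := factor_thru_ker a p inj exact _ ht0
    apply ns
    refine ⟨χ, mono_cancel a inj ?_⟩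
    rw [Category.assoc, hχ, Category.id_comp, hpow1 m]
  -- select an indecomposable component of Z
  obtain ⟨C, π, hPC, hCind, hneC⟩ := select hsub hPZ a w hne
  let v : D ⟶ C := w ≫ π
  have hvni : ¬IsIso v := by
    intro hiso
    apply hnl
    have hretr : ∃ r : Z ⟶ D, w ≫ r = 𝟙 D := by
      refine ⟨π ≫ inv v, ?_⟩
      rw [← Category.assoc]
      exact IsIso.hom_inv_id v
    obtain ⟨s, hs⟩ := (sec_iff_retr w piY hwinj hpiYsurj hexactZ).mpr hretr
    refine ⟨s ≫ piE, ?_⟩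
    apply ModuleCat.hom_ext; apply LinearMap.ext; intro y
    show p (piE (s y)) = g y
    have h1 : p (piE (s y)) = g (piY (s y)) := hZmem (s y)
    have h2 : piY (s y) = y := hom_apply_eq hs y
    rw [h1, h2]
  obtain ⟨E', a', p', c, hPE', hinj', hsurj', hexact', hns', hac, hcp⟩ :=
    push hres a p inj surj exact v hPC hX hneC
  exact ⟨C, E', v, a', p', c, hPC, hPE', hCind, hvni, hinj', hsurj', hexact', hns', hac, hcp⟩

end Step

/-! ### The starting stage and the main construction -/

section Main

variable {Λ : Type u} [Ring Λ] [IsArtinianRing Λ] {P : ModuleCat.{u} Λ → Prop}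

lemma P_pow (hsub : IsSubcat Λ P) (hres : IsResolving P) :
    ∀ n : ℕ, P (ModuleCat.of Λ (Fin n → Λ))
  | 0 => by
    have e : PUnit.{u+1} ≃ₗ[Λ] (Fin 0 → Λ) :=
      { toFun := fun _ => (fun i => i.elim0)
        map_add' := fun _ _ => funext fun i => i.elim0
        map_smul' := fun _ _ => funext fun i => i.elim0
        invFun := fun _ => PUnit.unit
        left_inv := fun _ => rfl
        right_inv := fun f => funext fun i => i.elim0 }
    exact hsub.iso_closed e.toModuleIso (hsub.zero_mem)
  | (n + 1) => by
    have e : (Λ × (Fin n → Λ)) ≃ₗ[Λ] (Fin (n + 1) → Λ) :=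
      { toFun := fun x => Fin.cons x.1 x.2
        map_add' := fun x y => by
          funext i
          refine Fin.cases ?_ ?_ i <;> simp [Fin.cons_zero, Fin.cons_succ]
        map_smul' := fun r x => by
          funext i
          refine Fin.cases ?_ ?_ i <;> simp [Fin.cons_zero, Fin.cons_succ]
        invFun := fun f => (f 0, fun i => f i.succ)
        left_inv := fun x => by
          refine Prod.ext ?_ ?_
          · simp [Fin.cons_zero]
          · funext i; simp [Fin.cons_succ]
        right_inv := fun f => by
          funext i
          refine Fin.cases ?_ ?_ i <;> simp [Fin.cons_zero, Fin.cons_succ] }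
    exact hsub.iso_closed e.toModuleIso (hsub.sum_closed hres.self_mem (P_pow hsub hres n))

lemma start_exists (hsub : IsSubcat Λ P) (hres : IsResolving P) {X : ModuleCat.{u} Λ}
    (hX : P X) (hnp : ¬ Module.Projective Λ X) :
    ∃ (D E : ModuleCat.{u} Λ) (a : D ⟶ E) (p : E ⟶ X),
      P D ∧ P E ∧ Indecomposable D ∧ Function.Injective a ∧ Function.Surjective p ∧
      (∀ e, p e = 0 ↔ ∃ d, a d = e) ∧ (¬∃ r : E ⟶ D, a ≫ r = 𝟙 D) := by
  classical
  haveI : Module.Finite Λ ↥X := hsub.fg X hX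
  obtain ⟨n, pl, hsurj⟩ := Module.Finite.exists_fin' (R := Λ) (M := ↥X)
  let F : ModuleCat.{u} Λ := ModuleCat.of Λ (Fin n → Λ)
  let p0 : F ⟶ X := ModuleCat.ofHom pl
  let Ks : Submodule Λ (Fin n → Λ) := LinearMap.ker p0.hom
  let K : ModuleCat.{u} Λ := ModuleCat.of Λ ↥Ks
  let a0 : K ⟶ F := ModuleCat.ofHom Ks.subtype
  have hPF : P F := P_pow hsub hres n
  have hPK : P K := hres.ker_epi_closed p0 hsurj hPF hX
  have hexact : ∀ e : ↥F, p0 e = 0 ↔ ∃ d : ↥K, a0 d = e := by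
    intro e
    constructor
    · intro h
      exact ⟨⟨e, h⟩, rfl⟩
    · rintro ⟨⟨d, hd⟩, rfl⟩
      exact hd
  have hinj : Function.Injective a0 := Subtype.val_injective
  have hns : ¬∃ r : F ⟶ K, a0 ≫ r = 𝟙 K := by
    rintro ⟨r, hr⟩
    obtain ⟨s, hs⟩ := (sec_iff_retr a0 p0 hinj hsurj hexact).mpr ⟨r, hr⟩
    apply hnp
    have hcomp : pl.comp s.hom = LinearMap.id := congrArg ModuleCat.Hom.hom hs
    haveI : Module.Projective Λ (Fin n → Λ) := inferInstance
    exact Module.Projective.of_split (R := Λ) (M := Fin n → Λ) (P := ↥X)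
      s.hom pl hcomp
  obtain ⟨C, π, hPC, hCind, hneC⟩ := select hsub hPK a0 (𝟙 K) hns
  obtain ⟨E', a', p', c, hPE', hinj', hsurj', hexact', hns', hac, hcp⟩ :=
    push hres a0 p0 hinj hsurj hexact (𝟙 K ≫ π) hPC hX hneC
  exact ⟨C, E', a', p', hPC, hPE', hCind, hinj', hsurj', hexact', hns'⟩

/-- A stage of the construction: a non-split extension of `X` by an indecomposable
module, everything in `𝒳`. -/
structure St {Λ : Type u} [Ring Λ] (P : ModuleCat.{u} Λ → Prop) (X : ModuleCat.{u} Λ) where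
  D : ModuleCat.{u} Λ
  E : ModuleCat.{u} Λ
  a : D ⟶ E
  p : E ⟶ X
  hD : P D
  hE : P E
  hDind : Indecomposable D
  inj : Function.Injective a
  surj : Function.Surjective p
  exact : ∀ e : ↥E, p e = 0 ↔ ∃ d, a d = e
  ns : ¬∃ r : E ⟶ D, a ≫ r = 𝟙 D

/-- Data connecting a stage to the next one. -/
structure StepData {Λ : Type u} [Ring Λ] {P : ModuleCat.{u} Λ → Prop}
    {X : ModuleCat.{u} Λ} (s : St P X) where
  t : St P X
  v : s.D ⟶ t.D
  c : s.E ⟶ t.E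
  hv : ¬IsIso v
  hac : s.a ≫ c = v ≫ t.a
  hcp : c ≫ t.p = s.p

end Main

/-- Let `Λ` be left artinian and `𝒳` a resolving subcategory of
`Λ`-mod such that every family of morphisms between indecomposable modules in `𝒳` is
noetherian. Then every indecomposable non-projective `X ∈ 𝒳` admits a right almost
split morphism `f : B → X` in `𝒳`. -/
theorem statement4 {Λ : Type u} [Ring Λ] [IsArtinianRing Λ]
    (P : ModuleCat.{u} Λ → Prop) (hsub : IsSubcat Λ P) (hres : IsResolving P)
    (hchains : HomChainsNoetherian P)
    (X : ModuleCat.{u} Λ) (hX : P X) (hind : Indecomposable X)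
    (hnp : ¬ Module.Projective Λ X) :
    ∃ (B : ModuleCat.{u} Λ) (_ : P B) (f : B ⟶ X),
      (¬∃ s : X ⟶ B, s ≫ f = 𝟙 X) ∧
      ∀ Y : ModuleCat.{u} Λ, P Y → ∀ g : Y ⟶ X,
        (¬∃ s : X ⟶ Y, s ≫ g = 𝟙 X) → ∃ h : Y ⟶ B, h ≫ f = g := by
  classical
  by_contra hno
  -- every stage admits a "bad" small map that does not lift
  have hbad : ∀ s : St P X, ∃ Y : ModuleCat.{u} Λ, P Y ∧ ∃ g : Y ⟶ X,
      (¬∃ sc : X ⟶ Y, sc ≫ g = 𝟙 X) ∧ ¬∃ h : Y ⟶ s.E, h ≫ s.p = g := by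
    intro s
    by_contra hb
    push_neg at hb
    apply hno
    refine ⟨s.E, s.hE, s.p, ?_, ?_⟩
    · rintro ⟨sc, hsc⟩
      exact s.ns ((sec_iff_retr s.a s.p s.inj s.surj s.exact).mp ⟨sc, hsc⟩)
    · intro Y hY g hg
      exact hb Y hY g (fun sc hsc => hg ⟨sc, hsc⟩)
  have hstep : ∀ s : St P X, Nonempty (StepData s) := by
    intro s
    obtain ⟨Y, hY, g, hsm, hnl⟩ := hbad s
    obtain ⟨D', E', v, a', p', c, hPD', hPE', hind', hvni, hinj', hsurj', hexact', hns',
      hac, hcp⟩ := step_exists hsub hres hchains hX hind s.hD s.hE s.hDind s.a s.p s.inj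
        s.surj s.exact s.ns hY g hsm hnl
    exact ⟨⟨⟨D', E', a', p', hPD', hPE', hind', hinj', hsurj', hexact', hns'⟩, v, c,
      hvni, hac, hcp⟩⟩
  obtain ⟨D0, E0, a0, p0, hPD0, hPE0, hind0, hinj0, hsurj0, hexact0, hns0⟩ :=
    start_exists hsub hres hX hnp
  let st0 : St P X := ⟨D0, E0, a0, p0, hPD0, hPE0, hind0, hinj0, hsurj0, hexact0, hns0⟩
  let SD : ∀ s : St P X, StepData s := fun s => Classical.choice (hstep s)
  let F : ℕ → St P X := fun i => Nat.rec st0 (fun _ s => (SD s).t) i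
  let Xc : ℕ → ObjectProperty.FullSubcategory P := fun i => ⟨(F i).D, (F i).hD⟩
  let fc : ∀ i, Xc i ⟶ Xc (i + 1) := fun i => ObjectProperty.homMk (SD (F i)).v
  let μ : ∀ i, (F 0).E ⟶ (F i).E := fun i =>
    Nat.rec (𝟙 (F 0).E) (fun j m => m ≫ (SD (F j)).c) i
  have I1 : ∀ i, μ i ≫ (F i).p = (F 0).p := by
    intro i
    induction i with
    | zero => exact Category.id_comp _
    | succ i ih =>
      show (μ i ≫ (SD (F i)).c) ≫ ((SD (F i)).t).p = (F 0).p
      rw [Category.assoc, (SD (F i)).hcp, ih]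
  let toMod : ∀ {i j : ℕ}, (Xc i ⟶ Xc j) → ((F i).D ⟶ (F j).D) := fun {i j} f => f.hom
  have I2 : ∀ i, (F 0).a ≫ μ i = toMod (i := 0) (j := i) (chainComp fc i) ≫ (F i).a := by
    intro i
    induction i with
    | zero =>
      show (F 0).a ≫ 𝟙 ((F 0).E) = 𝟙 ((F 0).D) ≫ (F 0).a
      rw [Category.comp_id, Category.id_comp]
    | succ i ih =>
      show (F 0).a ≫ (μ i ≫ (SD (F i)).c)
        = (toMod (i := 0) (j := i) (chainComp fc i) ≫ (SD (F i)).v) ≫ ((SD (F i)).t).a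
      rw [← Category.assoc, ih, Category.assoc, (SD (F i)).hac, ← Category.assoc]
  have hVnz : ∀ i, chainComp fc i ≠ 0 := by
    intro i h0
    have h0' : toMod (i := 0) (j := i) (chainComp fc i) = 0 := by rw [h0]; rfl
    have h1 : (F 0).a ≫ μ i = 0 := by rw [I2 i, h0', zero_comp]
    obtain ⟨h, hh⟩ := factor_thru_coker (F 0).a (F 0).p (F 0).surj (F 0).exact (μ i) h1
    have h2 : h ≫ (F i).p = 𝟙 X := by
      apply epi_cancel (F 0).p (F 0).surj
      rw [← Category.assoc, hh, I1 i, Category.comp_id]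
    exact (F i).ns
      ((sec_iff_retr (F i).a (F i).p (F i).inj (F i).surj (F i).exact).mp ⟨h, h2⟩)
  obtain ⟨n, hn⟩ := hchains Xc (fun i => (F i).hDind) fc hVnz
  have h1 : IsIso (fc n) := hn n le_rfl
  have h2 : IsIso ((ObjectProperty.ι P).map (fc n)) := inferInstance
  exact (SD (F n)).hv h2


end Paper
end

section
/- Let Λ be a left artinian ring and let 𝒳 be a subcategory of Λ-mod. If every family of homomorphisms between indecomposable modules in 𝒳 is noetherian, then every non-zero 𝒳^op-module has a simple subfunctor. -/
open CategoryTheory Limits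

universe u

namespace Paper

/-- `F` has a simple subfunctor. -/
def HasSimpleSubfunctor {D : Type*} [Category D] (F : D ⥤ AddCommGrpCat.{u}) : Prop :=
  ∃ S : Subfunctor F, (∃ (X : D) (x : F.obj X), x ∈ S.pt X ∧ x ≠ 0) ∧
    ∀ T : Subfunctor F, T.le S → (∀ X, T.pt X = ⊥) ∨ (∀ X, T.pt X = S.pt X)

section Aux

variable {Λ : Type u} [Ring Λ]

/-- A module has a decomposition into indecomposable direct summands. -/
def HasDecomp (M : ModuleCat.{u} Λ) : Prop :=
  ∃ (ι : Type) (_ : Fintype ι) (W : ι → ModuleCat.{u} Λ) (p : ∀ j, M ⟶ W j)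
    (i : ∀ j, W j ⟶ M),
    (∀ j, Indecomposable (W j)) ∧ (∀ j, i j ≫ p j = 𝟙 (W j)) ∧ ∑ j, p j ≫ i j = 𝟙 M

lemma hasDecomp_of_subsingleton (M : ModuleCat.{u} Λ) [Subsingleton M] : HasDecomp M := by
  refine ⟨PEmpty, inferInstance, PEmpty.elim, fun j => j.elim, fun j => j.elim,
    fun j => j.elim, fun j => j.elim, ?_⟩
  rw [Finset.univ_eq_empty, Finset.sum_empty]
  ext x
  exact Subsingleton.elim _ _

lemma hasDecomp_of_indecomposable {M : ModuleCat.{u} Λ} (h : Indecomposable M) : HasDecomp M :=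
  ⟨PUnit, inferInstance, fun _ => M, fun _ => 𝟙 M, fun _ => 𝟙 M, fun _ => h,
    fun _ => by simp, by simp⟩

lemma HasDecomp.of_iso {M M' : ModuleCat.{u} Λ} (e : M ≅ M') (h : HasDecomp M) : HasDecomp M' := by
  obtain ⟨ι, _, W, p, i, hind, hsplit, hsum⟩ := h
  refine ⟨ι, ‹_›, W, fun j => e.inv ≫ p j, fun j => i j ≫ e.hom, hind, fun j => by
    simpa using hsplit j, ?_⟩
  have : ∑ j, (e.inv ≫ p j) ≫ (i j ≫ e.hom) = e.inv ≫ (∑ j, p j ≫ i j) ≫ e.hom := by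
    rw [Preadditive.sum_comp, Preadditive.comp_sum]
    simp [Category.assoc]
  rw [this, hsum]
  simp

lemma HasDecomp.glue {M A B : ModuleCat.{u} Λ} (q₁ : M ⟶ A) (j₁ : A ⟶ M) (q₂ : M ⟶ B)
    (j₂ : B ⟶ M) (h₁ : j₁ ≫ q₁ = 𝟙 A) (h₂ : j₂ ≫ q₂ = 𝟙 B)
    (hsum : q₁ ≫ j₁ + q₂ ≫ j₂ = 𝟙 M) (hA : HasDecomp A) (hB : HasDecomp B) : HasDecomp M := by
  obtain ⟨ι₁, _, W₁, p₁, i₁, hind₁, hsplit₁, hsum₁⟩ := hA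
  obtain ⟨ι₂, _, W₂, p₂, i₂, hind₂, hsplit₂, hsum₂⟩ := hB
  refine ⟨ι₁ ⊕ ι₂, inferInstance, Sum.elim W₁ W₂,
    fun j => Sum.rec (fun j => q₁ ≫ p₁ j) (fun j => q₂ ≫ p₂ j) j,
    fun j => Sum.rec (fun j => i₁ j ≫ j₁) (fun j => i₂ j ≫ j₂) j,
    fun j => ?_, fun j => ?_, ?_⟩
  · cases j with
    | inl j => exact hind₁ j
    | inr j => exact hind₂ j
  · cases j with
    | inl j =>
        show (i₁ j ≫ j₁) ≫ (q₁ ≫ p₁ j) = 𝟙 (W₁ j)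
        rw [Category.assoc, ← Category.assoc j₁ q₁ (p₁ j), h₁, Category.id_comp, hsplit₁ j]
    | inr j =>
        show (i₂ j ≫ j₂) ≫ (q₂ ≫ p₂ j) = 𝟙 (W₂ j)
        rw [Category.assoc, ← Category.assoc j₂ q₂ (p₂ j), h₂, Category.id_comp, hsplit₂ j]
  · rw [Fintype.sum_sum_type]
    have e1 : ∑ j : ι₁, (q₁ ≫ p₁ j) ≫ (i₁ j ≫ j₁) = q₁ ≫ j₁ := by
      conv_rhs => rw [← Category.id_comp j₁, ← hsum₁, Preadditive.sum_comp,
        Preadditive.comp_sum]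
      exact Finset.sum_congr rfl fun j _ => by simp [Category.assoc]
    have e2 : ∑ j : ι₂, (q₂ ≫ p₂ j) ≫ (i₂ j ≫ j₂) = q₂ ≫ j₂ := by
      conv_rhs => rw [← Category.id_comp j₂, ← hsum₂, Preadditive.sum_comp,
        Preadditive.comp_sum]
      exact Finset.sum_congr rfl fun j _ => by simp [Category.assoc]
    exact (congrArg₂ (· + ·) e1 e2).trans hsum


lemma isZero_iff_subsingleton (M : ModuleCat.{u} Λ) : IsZero M ↔ Subsingleton M := by
  constructor
  · intro h
    refine ⟨fun a b => ?_⟩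
    have h1 : (𝟙 M : M ⟶ M) = 0 := h.eq_of_src _ _
    have : ∀ x : M, x = 0 := fun x => by
      conv_lhs => rw [show x = (𝟙 M : M ⟶ M) x from rfl]
      rw [h1]
      rfl
    rw [this a, this b]
  · intro h
    exact ModuleCat.isZero_of_subsingleton M

theorem hasDecomp_of_finite [IsArtinianRing Λ] (M : ModuleCat.{u} Λ)
    (hM : Module.Finite Λ M) : HasDecomp M := by
  haveI : Module.Finite Λ M := hM
  haveI : IsArtinian Λ M := isArtinian_of_fg_of_artinian'
  have main : ∀ N : Submodule Λ M, HasDecomp (ModuleCat.of Λ N) := by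
    intro N
    induction N using WellFoundedLT.induction with
    | ind N IH =>
    by_cases hss : Subsingleton N
    · exact @hasDecomp_of_subsingleton _ _ _ hss
    by_cases hindec : Indecomposable (ModuleCat.of Λ N)
    · exact hasDecomp_of_indecomposable hindec
    -- not zero, not indecomposable
    have hnz : ¬IsZero (ModuleCat.of Λ N) := by
      rw [isZero_iff_subsingleton]
      exact hss
    rw [Indecomposable] at hindec
    push_neg at hindec
    obtain ⟨A, B, e, hA, hB⟩ := hindec hnz
    set q₁ : ModuleCat.of Λ N ⟶ A := e.hom ≫ biprod.fst with hq₁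
    set j₁ : A ⟶ ModuleCat.of Λ N := biprod.inl ≫ e.inv with hj₁
    set q₂ : ModuleCat.of Λ N ⟶ B := e.hom ≫ biprod.snd with hq₂
    set j₂ : B ⟶ ModuleCat.of Λ N := biprod.inr ≫ e.inv with hj₂
    have h₁ : j₁ ≫ q₁ = 𝟙 A := by simp [hq₁, hj₁]
    have h₂ : j₂ ≫ q₂ = 𝟙 B := by simp [hq₂, hj₂]
    have h12 : j₁ ≫ q₂ = 0 := by simp [hq₂, hj₁]
    have h21 : j₂ ≫ q₁ = 0 := by simp [hq₁, hj₂]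
    have hsum : q₁ ≫ j₁ + q₂ ≫ j₂ = 𝟙 (ModuleCat.of Λ N) := by
      rw [hq₁, hj₁, hq₂, hj₂]
      rw [Category.assoc, Category.assoc, ← Preadditive.comp_add, ← Category.assoc biprod.fst,
        ← Category.assoc biprod.snd, ← Preadditive.add_comp, biprod.total]
      simp
    -- the two submodules
    have key : ∀ (C D : ModuleCat.{u} Λ) (qc : ModuleCat.of Λ N ⟶ C)
        (jc : C ⟶ ModuleCat.of Λ N) (qd : ModuleCat.of Λ N ⟶ D)
        (jd : D ⟶ ModuleCat.of Λ N), jc ≫ qc = 𝟙 C → jd ≫ qd = 𝟙 D → jc ≫ qd = 0 →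
        ¬IsZero D → HasDecomp C := by
      intro C D qc jc qd jd hc hd hcd hnzD
      have hcinv : ∀ x : C, qc.hom (jc.hom x) = x :=
        fun x => LinearMap.congr_fun (congrArg ModuleCat.Hom.hom hc : LinearMap.comp
          qc.hom jc.hom = LinearMap.id) x
      set g : C →ₗ[Λ] M := N.subtype ∘ₗ jc.hom with hg
      have hginj : Function.Injective g := by
        refine (Submodule.injective_subtype N).comp ?_
        intro a b hab
        calc a = qc.hom (jc.hom a) := (hcinv a).symm
          _ = qc.hom (jc.hom b) := congrArg _ hab
          _ = b := hcinv b
      set N₁ : Submodule Λ M := LinearMap.range g with hN₁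
      have hle : N₁ ≤ N := by
        rintro x ⟨a, rfl⟩
        exact (jc.hom a).2
      have hne : N₁ ≠ N := by
        intro hEq
        apply hnzD
        rw [isZero_iff_subsingleton]
        refine ⟨fun a b => ?_⟩
        have hsurj : ∀ y : N, ∃ a : C, jc.hom a = y := by
          intro y
          have : (y : M) ∈ N₁ := by rw [hEq]; exact y.2
          obtain ⟨a, ha⟩ := this
          exact ⟨a, Subtype.ext ha⟩
        have hqd0 : ∀ y : N, qd.hom y = 0 := by
          intro y
          obtain ⟨a, rfl⟩ := hsurj y
          exact LinearMap.congr_fun (congrArg ModuleCat.Hom.hom hcd : LinearMap.comp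
            qd.hom jc.hom = 0) a
        have hb : ∀ x : D, x = 0 := by
          intro x
          have := LinearMap.congr_fun (congrArg ModuleCat.Hom.hom hd : LinearMap.comp
            qd.hom jd.hom = LinearMap.id) x
          have h2 : qd.hom (jd.hom x) = x := this
          rw [hqd0] at h2
          exact h2.symm
        rw [hb a, hb b]
      have hlt : N₁ < N := lt_of_le_of_ne hle hne
      have hdec := IH N₁ hlt
      have eC : ModuleCat.of Λ N₁ ≅ C :=
        (LinearEquiv.ofInjective g hginj).symm.toModuleIso
      exact hdec.of_iso eC
    have hdA : HasDecomp A := key A B q₁ j₁ q₂ j₂ h₁ h₂ h12 hB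
    have hdB : HasDecomp B := key B A q₂ j₂ q₁ j₁ h₂ h₁ h21 hA
    exact HasDecomp.glue q₁ j₁ q₂ j₂ h₁ h₂ hsum hdA hdB
  have := main ⊤
  exact this.of_iso (Submodule.topEquiv.toModuleIso : ModuleCat.of Λ (⊤ : Submodule Λ M) ≅ ModuleCat.of Λ M)

section FunctorLayer

variable {P : ModuleCat.{u} Λ → Prop}
variable (F : ObjectProperty.FullSubcategory P ⥤ AddCommGrpCat.{u}) [F.Additive]

lemma AddCommGrp.sum_apply {G H : AddCommGrpCat.{u}} {ι : Type} (s : Finset ι)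
    (f : ι → (G ⟶ H)) (x : G) : (∑ j ∈ s, f j) x = ∑ j ∈ s, f j x := by
  classical
  induction s using Finset.induction_on with
  | empty => rfl
  | insert _ _ hx ih =>
      rw [Finset.sum_insert hx, Finset.sum_insert hx, AddCommGrpCat.hom_add_apply, ih]

/-- The cyclic subfunctor generated by `y : F.obj Y`. -/
def cyc (Y : ObjectProperty.FullSubcategory P) (y : F.obj Y) : Subfunctor F where
  pt Z :=
    { carrier := {z | ∃ g : Y ⟶ Z, F.map g y = z}
      zero_mem' := ⟨0, by rw [F.map_zero]; rfl⟩
      add_mem' := by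
        rintro a b ⟨g, rfl⟩ ⟨h, rfl⟩
        exact ⟨g + h, by rw [F.map_add]; rfl⟩
      neg_mem' := by
        rintro a ⟨g, rfl⟩
        exact ⟨-g, by rw [F.map_neg]; rfl⟩ }
  map_mem := by
    rintro Z Z' f x ⟨g, rfl⟩
    exact ⟨g ≫ f, by rw [F.map_comp]; rfl⟩

lemma mem_cyc_self (Y : ObjectProperty.FullSubcategory P) (y : F.obj Y) : y ∈ (cyc F Y y).pt Y :=
  ⟨𝟙 Y, by rw [F.map_id]; rfl⟩

lemma cyc_le {T : Subfunctor F} {Y : ObjectProperty.FullSubcategory P} {y : F.obj Y}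
    (h : y ∈ T.pt Y) : (cyc F Y y).le T := by
  rintro Z z ⟨g, rfl⟩
  exact T.map_mem g y h

/-- The trivial (full) subfunctor. -/
def topSub : Subfunctor F where
  pt _ := ⊤
  map_mem _ _ _ := trivial

lemma exists_indec [IsArtinianRing Λ] (hsub : IsSubcat Λ P) (T : Subfunctor F)
    (W : ObjectProperty.FullSubcategory P) (t : F.obj W) (ht : t ∈ T.pt W) (ht0 : t ≠ 0) :
    ∃ (Y : ObjectProperty.FullSubcategory P) (z : F.obj Y),
      Indecomposable Y.obj ∧ z ≠ 0 ∧ z ∈ T.pt Y := by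
  obtain ⟨ι, _, W', p, i, hind, hsplit, hsum⟩ :=
    hasDecomp_of_finite W.obj (hsub.fg _ W.property)
  have hP : ∀ j, P (W' j) := fun j => hsub.summand_closed W.property ⟨i j, p j, hsplit j⟩
  let Y : ι → ObjectProperty.FullSubcategory P := fun j => ⟨W' j, hP j⟩
  let pS : ∀ j, W ⟶ Y j := fun j => ObjectProperty.homMk (p j)
  let iS : ∀ j, Y j ⟶ W := fun j => ObjectProperty.homMk (i j)
  have hsumS : (∑ j, pS j ≫ iS j : W ⟶ W) = 𝟙 W := by
    apply (ObjectProperty.ι P).map_injective; rw [Functor.map_sum, CategoryTheory.Functor.map_id]; exact hsum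
  by_cases hall : ∀ j, F.map (pS j) t = 0
  · exfalso
    apply ht0
    have h1 : F.map (𝟙 W) t = t := by rw [F.map_id]; rfl
    rw [← hsumS, Functor.map_sum, AddCommGrp.sum_apply] at h1
    have h2 : ∀ j ∈ (Finset.univ : Finset ι), F.map (pS j ≫ iS j) t = 0 := by
      intro j _
      have hc : F.map (pS j ≫ iS j) t = F.map (iS j) (F.map (pS j) t) := by
        rw [F.map_comp]; rfl
      rw [hc, hall j, map_zero]
    rw [← h1, Finset.sum_eq_zero h2]
  · push_neg at hall
    obtain ⟨j, hj⟩ := hall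
    exact ⟨Y j, F.map (pS j) t, hind j, hj, T.map_mem (pS j) t ht⟩

end FunctorLayer

end Aux

/-- Let `Λ` be left artinian and `𝒳` a subcategory of `Λ`-mod. If
every family of homomorphisms between indecomposable modules in `𝒳` is noetherian,
then every non-zero `𝒳ᵒᵖ`-module has a simple subfunctor. -/
theorem statement8 {Λ : Type u} [Ring Λ] [IsArtinianRing Λ]
    (P : ModuleCat.{u} Λ → Prop) (hsub : IsSubcat Λ P)
    (hnoeth : HomChainsNoetherian P) :
    ∀ F : ObjectProperty.FullSubcategory P ⥤ AddCommGrpCat.{u}, F.Additive →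
      (∃ (X : ObjectProperty.FullSubcategory P) (x : F.obj X), x ≠ 0) →
      HasSimpleSubfunctor F := by
  intro F hF hx
  haveI : F.Additive := hF
  obtain ⟨X0, x0, hx0⟩ := hx
  -- find a nonzero element over an indecomposable object
  obtain ⟨Y0, z0, hindY0, hz0, -⟩ :=
    exists_indec F hsub (topSub F) X0 x0 trivial hx0
  -- the type of "good" pairs
  let GoodT := {q : Σ Y : ObjectProperty.FullSubcategory P, F.obj Y // q.2 ≠ 0 ∧ Indecomposable q.1.obj}
  have q0 : GoodT := ⟨⟨Y0, z0⟩, hz0, hindY0⟩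
  -- there is a minimal good pair
  have hmin : ∃ q : GoodT, ∀ r : GoodT,
      (cyc F r.1.1 r.1.2).le (cyc F q.1.1 q.1.2) →
      (cyc F q.1.1 q.1.2).le (cyc F r.1.1 r.1.2) := by
    by_contra hcon
    push_neg at hcon
    have bad : ∀ q : GoodT, ∃ r : GoodT,
        (∃ g : q.1.1 ⟶ r.1.1, F.map g q.1.2 = r.1.2) ∧
        ¬ (cyc F q.1.1 q.1.2).le (cyc F r.1.1 r.1.2) := by
      intro q
      obtain ⟨r, hle, hnle⟩ := hcon q
      refine ⟨r, ?_, hnle⟩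
      have := hle r.1.1 (mem_cyc_self F r.1.1 r.1.2)
      obtain ⟨g, hg⟩ := this
      exact ⟨g, hg⟩
    choose next hmem hnle using bad
    choose mor hmor using hmem
    let c : ℕ → GoodT := fun n => Nat.rec q0 (fun _ r => next r) n
    have hc : ∀ n, c (n + 1) = next (c n) := fun n => rfl
    let Xc : ℕ → ObjectProperty.FullSubcategory P := fun n => (c n).1.1
    let f : ∀ n, Xc n ⟶ Xc (n + 1) := fun n => mor (c n)
    have key : ∀ n, F.map (chainComp f n) (c 0).1.2 = (c n).1.2 := by
      intro n
      induction n with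
      | zero => rw [show chainComp f 0 = 𝟙 (Xc 0) from rfl, F.map_id]; rfl
      | succ n ih =>
          have h1 : chainComp f (n + 1) = chainComp f n ≫ f n := rfl
          rw [h1, F.map_comp]
          have h2 : F.map (chainComp f n ≫ f n) (c 0).1.2
              = F.map (f n) (F.map (chainComp f n) (c 0).1.2) := by
            rw [F.map_comp]; rfl
          calc (F.map (chainComp f n) ≫ F.map (f n)) (c 0).1.2
              = F.map (f n) (F.map (chainComp f n) (c 0).1.2) := rfl
            _ = F.map (f n) (c n).1.2 := by rw [ih]
            _ = (c (n + 1)).1.2 := hmor (c n)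
    have hne : ∀ n, chainComp f n ≠ 0 := by
      intro n h0
      apply (c n).2.1
      rw [← key n, h0, F.map_zero]
      rfl
    obtain ⟨n, hn⟩ := hnoeth Xc (fun n => (c n).2.2) f hne
    have hiso : IsIso (f n) := hn n le_rfl
    apply hnle (c n)
    apply cyc_le
    refine ⟨inv (f n), ?_⟩
    have h3 : F.map (inv (f n)) (F.map (f n) (c n).1.2) = (c n).1.2 := by
      have h4 : F.map (f n ≫ inv (f n)) (c n).1.2
          = F.map (inv (f n)) (F.map (f n) (c n).1.2) := by rw [F.map_comp]; rfl
      rw [← h4, IsIso.hom_inv_id, F.map_id]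
      rfl
    calc F.map (inv (f n)) (c (n + 1)).1.2
        = F.map (inv (f n)) (F.map (f n) (c n).1.2) := by rw [hmor (c n)]
      _ = (c n).1.2 := h3
  obtain ⟨q, hq⟩ := hmin
  refine ⟨cyc F q.1.1 q.1.2, ⟨q.1.1, q.1.2, mem_cyc_self F q.1.1 q.1.2, q.2.1⟩, ?_⟩
  intro T hT
  by_cases hbot : ∀ X, T.pt X = ⊥
  · exact Or.inl hbot
  · push_neg at hbot
    obtain ⟨W, hW⟩ := hbot
    have : ∃ t : F.obj W, t ∈ T.pt W ∧ t ≠ 0 := by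
      by_contra hc
      push_neg at hc
      exact hW (by
        rw [AddSubgroup.eq_bot_iff_forall]
        exact fun x hx => hc x hx)
    obtain ⟨t, htmem, ht0⟩ := this
    obtain ⟨Y, z, hindY, hz0, hzT⟩ := exists_indec F hsub T W t htmem ht0
    have hzS : (cyc F Y z).le (cyc F q.1.1 q.1.2) :=
      fun Z => le_trans ((cyc_le F hzT) Z) (hT Z)
    have hSz : (cyc F q.1.1 q.1.2).le (cyc F Y z) := hq ⟨⟨Y, z⟩, hz0, hindY⟩ hzS
    refine Or.inr fun X => le_antisymm ?_ ?_
    · exact hT X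
    · intro w hw
      exact (cyc_le F hzT) X (hSz X hw)

end Paper
end
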